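/- arXiv:2605.09448 — 7 statements merged into one kernel-verified Lean document; each statement's English description precedes it below -/
import Mathlib

section
/- Let L > 0 and let F : [0,1] → ℝ be twice continuously differentiable and strictly increasing with derivative f satisfying 0 < f(b) ≤ L and F(b)·f'(b) ≤ f(b)² for all b ∈ [0,1] (an L-regular log-concave CDF on [0,1]). Fix a ≥ 1. Then for every s ∈ ℝ the function b ↦ F(b)·(s − a·b) has a unique maximizer b(s) on [0,1], and for all s₁ ≤ s₂ one has 0 ≤ F(b(s₂)) − F(b(s₁)) ≤ L·(s₂ − s₁). In particular, the quantile map s ↦ F(b(s)) is nondecreasing and L-Lipschitz. -/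
open Set

/-- Population quantile stability: for an `L`-regular log-concave CDF `F` on `[0,1]`
(twice continuously differentiable, strictly increasing, density `f` with `0 < f ≤ L`
and `F·f' ≤ f²`), and any price `a ≥ 1`, the map `b ↦ F b * (s - a*b)` has a unique
maximizer `b(s)` on `[0,1]`, and the quantile map `s ↦ F (b s)` is nondecreasing and
`L`-Lipschitz. -/
theorem population_quantile_stability
    (L : ℝ) (hL : 0 < L)
    (F f f' : ℝ → ℝ)
    (hf : ∀ b ∈ Icc (0:ℝ) 1, HasDerivWithinAt F (f b) (Icc (0:ℝ) 1) b)
    (hf' : ∀ b ∈ Icc (0:ℝ) 1, HasDerivWithinAt f (f' b) (Icc (0:ℝ) 1) b)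
    (hf'_cont : ContinuousOn f' (Icc (0:ℝ) 1))
    (hF_mono : StrictMonoOn F (Icc (0:ℝ) 1))
    (hf_pos : ∀ b ∈ Icc (0:ℝ) 1, 0 < f b)
    (hf_le : ∀ b ∈ Icc (0:ℝ) 1, f b ≤ L)
    (hlogconc : ∀ b ∈ Icc (0:ℝ) 1, F b * f' b ≤ (f b) ^ 2)
    (a : ℝ) (ha : 1 ≤ a) :
    (∀ s : ℝ, ∃! b : ℝ, b ∈ Icc (0:ℝ) 1 ∧
        ∀ b' ∈ Icc (0:ℝ) 1, F b' * (s - a * b') ≤ F b * (s - a * b)) ∧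
    (∀ bm : ℝ → ℝ,
      (∀ s : ℝ, bm s ∈ Icc (0:ℝ) 1 ∧
          ∀ b' ∈ Icc (0:ℝ) 1, F b' * (s - a * b') ≤ F (bm s) * (s - a * bm s)) →
      ∀ s₁ s₂ : ℝ, s₁ ≤ s₂ →
        0 ≤ F (bm s₂) - F (bm s₁) ∧ F (bm s₂) - F (bm s₁) ≤ L * (s₂ - s₁)) := by
  have ha0 : (0:ℝ) < a := lt_of_lt_of_le one_pos ha
  have hF_cont : ContinuousOn F (Icc (0:ℝ) 1) := fun b hb => (hf b hb).continuousWithinAt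
  have hf_cont : ContinuousOn f (Icc (0:ℝ) 1) := fun b hb => (hf' b hb).continuousWithinAt
  set ψ : ℝ → ℝ := fun b => a * b + a * (F b / f b) with hψdef
  have hψ_cont : ContinuousOn ψ (Icc (0:ℝ) 1) :=
    (continuousOn_const.mul continuousOn_id).add
      (continuousOn_const.mul (hF_cont.div hf_cont (fun b hb => (hf_pos b hb).ne')))
  have hFat : ∀ u ∈ Ioo (0:ℝ) 1, HasDerivAt F (f u) u := fun u hu =>
    (hf u (Ioo_subset_Icc_self hu)).hasDerivAt (Icc_mem_nhds hu.1 hu.2)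
  have hfat : ∀ u ∈ Ioo (0:ℝ) 1, HasDerivAt f (f' u) u := fun u hu =>
    (hf' u (Ioo_subset_Icc_self hu)).hasDerivAt (Icc_mem_nhds hu.1 hu.2)
  have hφat : ∀ u ∈ Ioo (0:ℝ) 1,
      HasDerivAt (fun b => a * (F b / f b)) (a * ((f u * f u - F u * f' u) / f u ^ 2)) u := by
    intro u hu
    exact ((hFat u hu).div (hfat u hu) (hf_pos u (Ioo_subset_Icc_self hu)).ne').const_mul a
  have hψat : ∀ u ∈ Ioo (0:ℝ) 1,
      HasDerivAt ψ (a + a * ((f u * f u - F u * f' u) / f u ^ 2)) u := by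
    intro u hu
    exact (((hasDerivAt_id u).const_mul a).add (hφat u hu)).congr_deriv (by ring)
  have hq_nonneg : ∀ u ∈ Icc (0:ℝ) 1, 0 ≤ (f u * f u - F u * f' u) / f u ^ 2 := by
    intro u hu
    apply div_nonneg _ (sq_nonneg _)
    have h1 := hlogconc u hu
    nlinarith [hf_pos u hu]
  have hψmono : StrictMonoOn ψ (Icc (0:ℝ) 1) := by
    apply strictMonoOn_of_deriv_pos (convex_Icc 0 1) hψ_cont
    intro u hu
    rw [interior_Icc] at hu
    rw [(hψat u hu).deriv]
    have := hq_nonneg u (Ioo_subset_Icc_self hu)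
    nlinarith
  -- gap lemma : ψ grows at least at rate a
  have hψgap : ∀ x ∈ Icc (0:ℝ) 1, ∀ y ∈ Icc (0:ℝ) 1, x ≤ y → a * (y - x) ≤ ψ y - ψ x := by
    have hφcont : ContinuousOn (fun b => a * (F b / f b)) (Icc (0:ℝ) 1) :=
      continuousOn_const.mul (hF_cont.div hf_cont (fun b hb => (hf_pos b hb).ne'))
    have hφmono : MonotoneOn (fun b => a * (F b / f b)) (Icc (0:ℝ) 1) := by
      apply monotoneOn_of_deriv_nonneg (convex_Icc 0 1) hφcont
      · intro u hu
        rw [interior_Icc] at hu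
        exact (hφat u hu).differentiableAt.differentiableWithinAt
      · intro u hu
        rw [interior_Icc] at hu
        rw [(hφat u hu).deriv]
        exact mul_nonneg ha0.le (hq_nonneg u (Ioo_subset_Icc_self hu))
    intro x hx y hy hxy
    have := hφmono hx hy hxy
    simp only [hψdef]
    nlinarith
  -- F is L-Lipschitz
  have hFlip : ∀ x ∈ Icc (0:ℝ) 1, ∀ y ∈ Icc (0:ℝ) 1, x ≤ y → F y - F x ≤ L * (y - x) := by
    have hLcont : ContinuousOn (fun b => L * b - F b) (Icc (0:ℝ) 1) :=
      (continuousOn_const.mul continuousOn_id).sub hF_cont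
    have hmono : MonotoneOn (fun b => L * b - F b) (Icc (0:ℝ) 1) := by
      apply monotoneOn_of_deriv_nonneg (convex_Icc 0 1) hLcont
      · intro u hu
        rw [interior_Icc] at hu
        have hd : HasDerivAt (fun b => L * b - F b) (L * 1 - f u) u :=
          ((hasDerivAt_id u).const_mul L).sub (hFat u hu)
        exact hd.differentiableAt.differentiableWithinAt
      · intro u hu
        rw [interior_Icc] at hu
        have hd : HasDerivAt (fun b => L * b - F b) (L * 1 - f u) u :=
          ((hasDerivAt_id u).const_mul L).sub (hFat u hu)
        rw [hd.deriv]
        have := hf_le u (Ioo_subset_Icc_self hu)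
        linarith
    intro x hx y hy hxy
    have := hmono hx hy hxy
    simp only at this
    linarith
  -- derivative of the objective
  have hGderiv : ∀ s : ℝ, ∀ u ∈ Ioo (0:ℝ) 1,
      HasDerivAt (fun b => F b * (s - a * b)) (f u * (s - ψ u)) u := by
    intro s u hu
    have hfne : f u ≠ 0 := (hf_pos u (Ioo_subset_Icc_self hu)).ne'
    have h := (hFat u hu).mul (((hasDerivAt_id u).const_mul a).const_sub s)
    apply h.congr_deriv
    simp only [hψdef]
    field_simp
    simp only [id_eq]
    ring
  have hG_cont : ∀ s : ℝ, ContinuousOn (fun b => F b * (s - a * b)) (Icc (0:ℝ) 1) :=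
    fun s => hF_cont.mul (continuousOn_const.sub (continuousOn_const.mul continuousOn_id))
  -- unimodality lemmas
  have mono_incr : ∀ (s x y : ℝ), 0 ≤ x → y ≤ 1 → (∀ u ∈ Ioo x y, ψ u < s) →
      StrictMonoOn (fun b => F b * (s - a * b)) (Icc x y) := by
    intro s x y hx hy hlt
    apply strictMonoOn_of_deriv_pos (convex_Icc x y) ((hG_cont s).mono (Icc_subset_Icc hx hy))
    intro u hu
    rw [interior_Icc] at hu
    have hu01 : u ∈ Ioo (0:ℝ) 1 := ⟨lt_of_le_of_lt hx hu.1, lt_of_lt_of_le hu.2 hy⟩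
    rw [(hGderiv s u hu01).deriv]
    have h1 := hlt u hu
    have h2 := hf_pos u (Ioo_subset_Icc_self hu01)
    nlinarith
  have mono_decr : ∀ (s x y : ℝ), 0 ≤ x → y ≤ 1 → (∀ u ∈ Ioo x y, s < ψ u) →
      StrictAntiOn (fun b => F b * (s - a * b)) (Icc x y) := by
    intro s x y hx hy hlt
    apply strictAntiOn_of_deriv_neg (convex_Icc x y) ((hG_cont s).mono (Icc_subset_Icc hx hy))
    intro u hu
    rw [interior_Icc] at hu
    have hu01 : u ∈ Ioo (0:ℝ) 1 := ⟨lt_of_le_of_lt hx hu.1, lt_of_lt_of_le hu.2 hy⟩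
    rw [(hGderiv s u hu01).deriv]
    have h1 := hlt u hu
    have h2 := hf_pos u (Ioo_subset_Icc_self hu01)
    nlinarith
  -- first-order conditions
  have focL : ∀ (s b : ℝ), b ∈ Icc (0:ℝ) 1 →
      (∀ b' ∈ Icc (0:ℝ) 1, F b' * (s - a * b') ≤ F b * (s - a * b)) → b < 1 → s ≤ ψ b := by
    intro s b hb hmax hb1
    by_contra hcon
    push_neg at hcon
    obtain ⟨c, hbc, hcmem, hcub⟩ : ∃ c, b < c ∧ c ∈ Icc (0:ℝ) 1 ∧ ∀ u ∈ Ioo b c, ψ u < s := by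
      by_cases h1 : s < ψ 1
      · obtain ⟨c, hc, hψc⟩ := intermediate_value_Ioo hb1.le
          (hψ_cont.mono (Icc_subset_Icc hb.1 le_rfl)) ⟨hcon, h1⟩
        refine ⟨c, hc.1, ⟨le_trans hb.1 hc.1.le, hc.2.le⟩, fun u hu => ?_⟩
        have : ψ u < ψ c := hψmono ⟨le_trans hb.1 hu.1.le, le_trans hu.2.le hc.2.le⟩
          ⟨le_trans hb.1 hc.1.le, hc.2.le⟩ hu.2
        linarith [this, hψc.le, hψc.ge]
      · push_neg at h1
        refine ⟨1, hb1, right_mem_Icc.mpr zero_le_one, fun u hu => ?_⟩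
        have : ψ u < ψ 1 := hψmono ⟨le_trans hb.1 hu.1.le, hu.2.le⟩
          (right_mem_Icc.mpr zero_le_one) hu.2
        linarith
    have hlt := mono_incr s b c hb.1 hcmem.2 hcub ⟨le_rfl, hbc.le⟩ ⟨hbc.le, le_rfl⟩ hbc
    exact absurd (hmax c hcmem) (not_le.mpr hlt)
  have focR : ∀ (s b : ℝ), b ∈ Icc (0:ℝ) 1 →
      (∀ b' ∈ Icc (0:ℝ) 1, F b' * (s - a * b') ≤ F b * (s - a * b)) → 0 < b → ψ b ≤ s := by
    intro s b hb hmax hb0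
    by_contra hcon
    push_neg at hcon
    obtain ⟨c, hcb, hcmem, hclb⟩ : ∃ c, c < b ∧ c ∈ Icc (0:ℝ) 1 ∧ ∀ u ∈ Ioo c b, s < ψ u := by
      by_cases h0 : ψ 0 < s
      · obtain ⟨c, hc, hψc⟩ := intermediate_value_Ioo hb0.le
          (hψ_cont.mono (Icc_subset_Icc le_rfl hb.2)) ⟨h0, hcon⟩
        refine ⟨c, hc.2, ⟨hc.1.le, le_trans hc.2.le hb.2⟩, fun u hu => ?_⟩
        have : ψ c < ψ u := hψmono ⟨hc.1.le, le_trans hc.2.le hb.2⟩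
          ⟨le_trans hc.1.le hu.1.le, le_trans hu.2.le hb.2⟩ hu.1
        linarith [hψc.le, hψc.ge]
      · push_neg at h0
        refine ⟨0, hb0, left_mem_Icc.mpr zero_le_one, fun u hu => ?_⟩
        have : ψ 0 < ψ u := hψmono (left_mem_Icc.mpr zero_le_one)
          ⟨hu.1.le, le_trans hu.2.le hb.2⟩ hu.1
        linarith
    have hlt := mono_decr s c b hcmem.1 hb.2 hclb ⟨le_rfl, hcb.le⟩ ⟨hcb.le, le_rfl⟩ hcb
    exact absurd (hmax c hcmem) (not_le.mpr hlt)
  -- uniqueness of maximizers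
  have uniq : ∀ (s b b' : ℝ), b ∈ Icc (0:ℝ) 1 → b' ∈ Icc (0:ℝ) 1 →
      (∀ u ∈ Icc (0:ℝ) 1, F u * (s - a * u) ≤ F b * (s - a * b)) →
      (∀ u ∈ Icc (0:ℝ) 1, F u * (s - a * u) ≤ F b' * (s - a * b')) → b = b' := by
    intro s b b' hb hb' h h'
    by_contra hne
    rcases lt_or_gt_of_ne hne with hlt | hlt
    · have h1 : s ≤ ψ b := focL s b hb h (lt_of_lt_of_le hlt hb'.2)
      have h2 : ψ b' ≤ s := focR s b' hb' h' (lt_of_le_of_lt hb.1 hlt)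
      have := hψmono hb hb' hlt
      linarith
    · have h1 : s ≤ ψ b' := focL s b' hb' h' (lt_of_lt_of_le hlt hb.2)
      have h2 : ψ b ≤ s := focR s b hb h (lt_of_le_of_lt hb'.1 hlt)
      have := hψmono hb' hb hlt
      linarith
  -- existence of maximizers
  have exist : ∀ s : ℝ, ∃ b ∈ Icc (0:ℝ) 1,
      ∀ b' ∈ Icc (0:ℝ) 1, F b' * (s - a * b') ≤ F b * (s - a * b) := by
    intro s
    obtain ⟨b, hb, hmax⟩ := isCompact_Icc.exists_isMaxOn (nonempty_Icc.mpr zero_le_one) (hG_cont s)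
    exact ⟨b, hb, fun b' hb' => hmax hb'⟩
  have part1 : ∀ s : ℝ, ∃! b : ℝ, b ∈ Icc (0:ℝ) 1 ∧
      ∀ b' ∈ Icc (0:ℝ) 1, F b' * (s - a * b') ≤ F b * (s - a * b) := by
    intro s
    obtain ⟨b, hb, hmax⟩ := exist s
    exact ⟨b, ⟨hb, hmax⟩, fun b' hb' => uniq s b' b hb'.1 hb hb'.2 hmax⟩
  refine ⟨part1, ?_⟩
  intro bm hbm s₁ s₂ hs
  obtain ⟨hb₁, hmax₁⟩ := hbm s₁
  obtain ⟨hb₂, hmax₂⟩ := hbm s₂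
  constructor
  · rcases eq_or_lt_of_le hs with heq | hlt
    · subst heq
      have : bm s₁ = bm s₁ := rfl
      have heqb : bm s₁ = bm s₁ := rfl
      simp
    · have k1 := hmax₁ (bm s₂) hb₂
      have k2 := hmax₂ (bm s₁) hb₁
      nlinarith
  · rcases le_or_gt (bm s₂) (bm s₁) with hle | hlt
    · have hFle : F (bm s₂) ≤ F (bm s₁) := by
        rcases eq_or_lt_of_le hle with heq | h
        · rw [heq]
        · exact (hF_mono hb₂ hb₁ h).le
      nlinarith
    · have h1 : s₁ ≤ ψ (bm s₁) := focL s₁ (bm s₁) hb₁ hmax₁ (lt_of_lt_of_le hlt hb₂.2)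
      have h2 : ψ (bm s₂) ≤ s₂ := focR s₂ (bm s₂) hb₂ hmax₂ (lt_of_le_of_lt hb₁.1 hlt)
      have h3 := hψgap (bm s₁) hb₁ (bm s₂) hb₂ hlt.le
      have h4 := hFlip (bm s₁) hb₁ (bm s₂) hb₂ hlt.le
      have h5 : bm s₂ - bm s₁ ≤ s₂ - s₁ := by nlinarith
      nlinarith
end

section
/- For every L > 0 there exists a constant C, depending only on L, with the following property. Let F be an L-regular log-concave CDF on [0,1], let Z ≥ 0, a ∈ [1, 1+Z], ε ∈ (0,1], and let F̂ : [0,1] → [0,1] be nondecreasing with |F̂(b) − F(b)| ≤ 2ε for all b ∈ [0,1]. Let −1 ≤ s₁ ≤ s₂ ≤ 1+Z, and for i = 1,2 let bᵢ ∈ [0,1] be any maximizer of b ↦ F̂(b)·(sᵢ − a·b) over [0,1] (assumed to exist). Then F̂(b₂) − F̂(b₁) ≤ L·(s₂ − s₁) + C·√((1+Z)·ε). -/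
open Set

/-- Upgrade a derivative within `Icc 0 1` to a full derivative at interior points. -/
private lemma hasDerivAt_of_Icc {g g' : ℝ → ℝ}
    (h : ∀ b ∈ Icc (0:ℝ) 1, HasDerivWithinAt g (g' b) (Icc (0:ℝ) 1) b)
    {x : ℝ} (hx : x ∈ Ioo (0:ℝ) 1) : HasDerivAt g (g' x) x :=
  (h x (Ioo_subset_Icc_self hx)).hasDerivAt (Icc_mem_nhds hx.1 hx.2)

/-- The auxiliary function `M b = b + F b / f b - F b / L` is monotone on `(0,1)`:
this encodes convexity of `t ↦ b(t)·t - t²/(2L)` in quantile space. -/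
private lemma M_mono (L : ℝ) (hL : 0 < L) (F f f' : ℝ → ℝ)
    (hF : ∀ b ∈ Icc (0:ℝ) 1, HasDerivWithinAt F (f b) (Icc (0:ℝ) 1) b)
    (hf : ∀ b ∈ Icc (0:ℝ) 1, HasDerivWithinAt f (f' b) (Icc (0:ℝ) 1) b)
    (hfpos : ∀ b ∈ Icc (0:ℝ) 1, 0 < f b)
    (hfL : ∀ b ∈ Icc (0:ℝ) 1, f b ≤ L)
    (hlc : ∀ b ∈ Icc (0:ℝ) 1, F b * f' b ≤ (f b) ^ 2)
    {c₁ c₂ : ℝ} (h1 : c₁ ∈ Ioo (0:ℝ) 1) (h2 : c₂ ∈ Ioo (0:ℝ) 1) (hc : c₁ < c₂) :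
    c₁ + F c₁ / f c₁ - F c₁ / L ≤ c₂ + F c₂ / f c₂ - F c₂ / L := by
  set M : ℝ → ℝ := fun b => b + F b / f b - F b / L with hM
  set M' : ℝ → ℝ := fun b => 1 + (f b * f b - F b * f' b) / (f b) ^ 2 - f b / L with hM'
  have hFc : ContinuousOn F (Icc (0:ℝ) 1) := fun b hb => (hF b hb).continuousWithinAt
  have hfc : ContinuousOn f (Icc (0:ℝ) 1) := fun b hb => (hf b hb).continuousWithinAt
  have hsub : Icc c₁ c₂ ⊆ Icc (0:ℝ) 1 := Icc_subset_Icc h1.1.le h2.2.le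
  have hMc : ContinuousOn M (Icc c₁ c₂) := by
    apply ContinuousOn.sub
    · exact (continuousOn_id.add ((hFc.mono hsub).div (hfc.mono hsub)
        (fun b hb => (hfpos b (hsub hb)).ne')))
    · exact (hFc.mono hsub).div_const L
  have hMd : ∀ x ∈ Ioo c₁ c₂, HasDerivAt M (M' x) x := by
    intro x hx
    have hx01 : x ∈ Ioo (0:ℝ) 1 := ⟨h1.1.trans hx.1, hx.2.trans h2.2⟩
    have hFd : HasDerivAt F (f x) x := hasDerivAt_of_Icc hF hx01
    have hfd : HasDerivAt f (f' x) x := hasDerivAt_of_Icc hf hx01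
    have hfx : f x ≠ 0 := (hfpos x (Ioo_subset_Icc_self hx01)).ne'
    have := ((hasDerivAt_id x).add (hFd.div hfd hfx)).sub (hFd.div_const L)
    exact this
  obtain ⟨ξ, hξ, hξ'⟩ := exists_hasDerivAt_eq_slope M M' hc hMc hMd
  have hξ01 : ξ ∈ Icc (0:ℝ) 1 := hsub (Ioo_subset_Icc_self hξ)
  have hM'pos : 0 ≤ M' ξ := by
    have h1' : 0 ≤ (f ξ * f ξ - F ξ * f' ξ) / (f ξ) ^ 2 := by
      apply div_nonneg _ (sq_nonneg _)
      have := hlc ξ hξ01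
      nlinarith [hfpos ξ hξ01]
    have h2' : f ξ / L ≤ 1 := by
      rw [div_le_one hL]; exact hfL ξ hξ01
    simp only [hM']; linarith
  have : 0 ≤ (M c₂ - M c₁) / (c₂ - c₁) := hξ' ▸ hM'pos
  have hd : 0 < c₂ - c₁ := sub_pos.mpr hc
  have := (div_nonneg_iff.mp this)
  rcases this with ⟨h, _⟩ | ⟨_, h⟩
  · simpa [hM] using sub_nonneg.mp h
  · linarith

/-- Convexity of `K = b·F b - F b²/(2L)` "along `F`": the chord-slope inequality. -/
private lemma K_convex (L : ℝ) (hL : 0 < L) (F f f' : ℝ → ℝ)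
    (hF : ∀ b ∈ Icc (0:ℝ) 1, HasDerivWithinAt F (f b) (Icc (0:ℝ) 1) b)
    (hf : ∀ b ∈ Icc (0:ℝ) 1, HasDerivWithinAt f (f' b) (Icc (0:ℝ) 1) b)
    (hFmono : StrictMonoOn F (Icc (0:ℝ) 1))
    (hfpos : ∀ b ∈ Icc (0:ℝ) 1, 0 < f b)
    (hfL : ∀ b ∈ Icc (0:ℝ) 1, f b ≤ L)
    (hlc : ∀ b ∈ Icc (0:ℝ) 1, F b * f' b ≤ (f b) ^ 2)
    {x m y : ℝ} (hx : x ∈ Icc (0:ℝ) 1) (hy : y ∈ Icc (0:ℝ) 1)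
    (hxm : x < m) (hmy : m < y) :
    ((m * F m - (F m)^2/(2*L)) - (x * F x - (F x)^2/(2*L))) * (F y - F m) ≤
      ((y * F y - (F y)^2/(2*L)) - (m * F m - (F m)^2/(2*L))) * (F m - F x) := by
  set K : ℝ → ℝ := fun b => b * F b - (F b)^2/(2*L) with hK
  set K' : ℝ → ℝ := fun b => F b + b * f b - F b * f b / L with hK'
  have hm : m ∈ Icc (0:ℝ) 1 := ⟨hx.1.trans hxm.le, hmy.le.trans hy.2⟩
  have hFc : ContinuousOn F (Icc (0:ℝ) 1) := fun b hb => (hF b hb).continuousWithinAt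
  have hKc : ContinuousOn K (Icc (0:ℝ) 1) :=
    (continuousOn_id.mul hFc).sub ((hFc.pow 2).div_const (2*L))
  have hKd : ∀ z ∈ Ioo (0:ℝ) 1, HasDerivAt K (K' z) z := by
    intro z hz
    have hFd : HasDerivAt F (f z) z := hasDerivAt_of_Icc hF hz
    have := ((hasDerivAt_id z).mul hFd).sub ((hFd.pow 2).div_const (2*L))
    replace this : HasDerivAt K _ z := this
    convert this using 1
    simp only [hK', id]
    field_simp
    ring
  -- Cauchy MVT on [x,m]
  have hsub1 : Icc x m ⊆ Icc (0:ℝ) 1 := Icc_subset_Icc hx.1 hm.2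
  have hsub2 : Icc m y ⊆ Icc (0:ℝ) 1 := Icc_subset_Icc hm.1 hy.2
  have hIoo1 : Ioo x m ⊆ Ioo (0:ℝ) 1 := fun z hz =>
    ⟨lt_of_le_of_lt hx.1 hz.1, lt_of_lt_of_le hz.2 hm.2⟩
  have hIoo2 : Ioo m y ⊆ Ioo (0:ℝ) 1 := fun z hz =>
    ⟨lt_of_le_of_lt hm.1 hz.1, lt_of_lt_of_le hz.2 hy.2⟩
  obtain ⟨c₁, hc₁, e₁⟩ := exists_ratio_hasDerivAt_eq_ratio_slope F f hxm (hFc.mono hsub1)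
    (fun z hz => hasDerivAt_of_Icc hF (hIoo1 hz)) K K' (hKc.mono hsub1)
    (fun z hz => hKd z (hIoo1 hz))
  obtain ⟨c₂, hc₂, e₂⟩ := exists_ratio_hasDerivAt_eq_ratio_slope F f hmy (hFc.mono hsub2)
    (fun z hz => hasDerivAt_of_Icc hF (hIoo2 hz)) K K' (hKc.mono hsub2)
    (fun z hz => hKd z (hIoo2 hz))
  have hc₁01 : c₁ ∈ Ioo (0:ℝ) 1 := hIoo1 hc₁
  have hc₂01 : c₂ ∈ Ioo (0:ℝ) 1 := hIoo2 hc₂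
  -- K' c = M c * f c
  have hKM : ∀ c ∈ Ioo (0:ℝ) 1, K' c = (c + F c / f c - F c / L) * f c := by
    intro c hc
    have : f c ≠ 0 := (hfpos c (Ioo_subset_Icc_self hc)).ne'
    simp only [hK']
    field_simp
    ring
  have hf₁ : 0 < f c₁ := hfpos c₁ (Ioo_subset_Icc_self hc₁01)
  have hf₂ : 0 < f c₂ := hfpos c₂ (Ioo_subset_Icc_self hc₂01)
  -- slopes
  have s₁ : K m - K x = (F m - F x) * (c₁ + F c₁ / f c₁ - F c₁ / L) := by
    have := e₁
    rw [hKM c₁ hc₁01] at this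
    field_simp at this ⊢
    nlinarith [this]
  have s₂ : K y - K m = (F y - F m) * (c₂ + F c₂ / f c₂ - F c₂ / L) := by
    have := e₂
    rw [hKM c₂ hc₂01] at this
    field_simp at this ⊢
    nlinarith [this]
  have hMm : c₁ + F c₁ / f c₁ - F c₁ / L ≤ c₂ + F c₂ / f c₂ - F c₂ / L :=
    M_mono L hL F f f' hF hf hfpos hfL hlc hc₁01 hc₂01 (hc₁.2.trans hc₂.1)
  have hFxm : 0 < F m - F x := sub_pos.mpr (hFmono hx hm hxm)
  have hFmy : 0 < F y - F m := sub_pos.mpr (hFmono hm hy hmy)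
  calc (K m - K x) * (F y - F m)
      = (F m - F x) * (c₁ + F c₁ / f c₁ - F c₁ / L) * (F y - F m) := by rw [s₁]
    _ ≤ (F m - F x) * (c₂ + F c₂ / f c₂ - F c₂ / L) * (F y - F m) := by
        apply mul_le_mul_of_nonneg_right _ hFmy.le
        exact mul_le_mul_of_nonneg_left hMm hFxm.le
    _ = (K y - K m) * (F m - F x) := by rw [s₂]; ring

/-- Algebraic step: convexity of `K` along quantiles gives strong concavity of the
score in quantile space. -/
private lemma comb_ineq (L a s lam t1 t2 tm b1 b2 m : ℝ) (hL : 0 < L) (ha : 0 < a)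
    (htm : tm = (1-lam)*t1 + lam*t2)
    (hKle : m*tm - tm^2/(2*L) ≤ (1-lam)*(b1*t1 - t1^2/(2*L)) + lam*(b2*t2 - t2^2/(2*L))) :
    (1-lam)*(t1*(s - a*b1)) + lam*(t2*(s - a*b2)) + (a/(2*L))*lam*(1-lam)*(t2-t1)^2 ≤
      tm*(s - a*m) := by
  have key : tm*(s - a*m) - ((1-lam)*(t1*(s - a*b1)) + lam*(t2*(s - a*b2))
      + (a/(2*L))*lam*(1-lam)*(t2-t1)^2)
      = a*(((1-lam)*(b1*t1 - t1^2/(2*L)) + lam*(b2*t2 - t2^2/(2*L)))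
          - (m*tm - tm^2/(2*L))) := by
    subst htm
    field_simp
    ring
  nlinarith [mul_nonneg ha.le (sub_nonneg.mpr hKle)]

private lemma endgame (L a σ d sq δ lam U11 U12 U21 U22 : ℝ)
    (hL : 0 < L) (ha1 : 1 ≤ a) (hδ0 : 0 < δ) (hsq0 : 0 < sq) (hsq2 : sq^2 = L*δ)
    (hcase : sq < d) (hlamd : lam * d = sq)
    (hA1 : lam * (U11 - U12) ≥ (a/(2*L)) * lam * (1 - lam) * d^2 - δ)
    (hA2 : lam * (U22 - U21) ≥ (a/(2*L)) * (1 - lam) * (1 - (1 - lam)) * d^2 - δ)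
    (hid : (U11 - U12) + (U22 - U21) = σ * d) :
    d ≤ L * σ + 3 * sq := by
  have h2L0 : (0:ℝ) < 2 * L := by linarith
  have hL0 : L ≠ 0 := hL.ne'
  have e1 : (2*L) * ((a/(2*L)) * lam * (1 - lam) * d^2 - δ)
      = a * (lam * (1 - lam) * d^2) - 2*L*δ := by field_simp
  have e2 : (2*L) * ((a/(2*L)) * (1 - lam) * (1 - (1 - lam)) * d^2 - δ)
      = a * (lam * (1 - lam) * d^2) - 2*L*δ := by field_simp; ring
  have hB1 := mul_le_mul_of_nonneg_left hA1 h2L0.le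
  have hB2 := mul_le_mul_of_nonneg_left hA2 h2L0.le
  rw [e1] at hB1
  rw [e2] at hB2
  have hsum := add_le_add hB1 hB2
  have e3 : 2*L*(lam * (U11 - U12)) + 2*L*(lam * (U22 - U21))
      = 2*L*lam*((U11 - U12) + (U22 - U21)) := by ring
  rw [e3, hid] at hsum
  have e4 : 2*L*lam*(σ*d) = 2*L*σ*(lam*d) := by ring
  rw [e4, hlamd] at hsum
  -- hsum : a*(lam*(1-lam)*d^2) - 2Lδ + (same) ≤ 2*L*σ*sq
  have edd : lam * (1 - lam) * d^2 = sq*d - sq^2 := by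
    rw [← hlamd]; ring
  have hpos : 0 ≤ sq*d - sq^2 := by nlinarith [hsq0, hcase]
  have haX : sq*d - sq^2 ≤ a * (lam * (1 - lam) * d^2) := by
    rw [edd]; nlinarith [hpos, ha1]
  have hkey : 2*sq*d ≤ 2*L*σ*sq + 6*sq^2 := by nlinarith [hsum, haX, hsq2]
  have h2 : (2*sq)*d ≤ (2*sq)*(L*σ + 3*sq) := by nlinarith [hkey]
  exact le_of_mul_le_mul_left h2 (by positivity)

private lemma final_step (L σ d sq : ℝ) (hL : 0 < L) (hsq0 : 0 < sq)
    (h : 2*sq*d ≤ 2*L*σ*sq + 6*sq^2) : d ≤ L*σ + 3*sq := by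
  have h2 : (2*sq)*d ≤ (2*sq)*(L*σ + 3*sq) := by nlinarith [h]
  exact le_of_mul_le_mul_left h2 (by positivity)

set_option maxHeartbeats 2000000 in
/-- Empirical-transfer quantile stability: for every `L > 0` there is a constant `C`
(depending only on `L`) such that, for any `L`-regular log-concave CDF `F` on `[0,1]`,
price `a ∈ [1, 1+Z]`, estimate `F̂` of `F` with uniform error `≤ 2ε`, and empirical
maximizers `b₁, b₂` at signals `-1 ≤ s₁ ≤ s₂ ≤ 1+Z`, one has
`F̂ b₂ - F̂ b₁ ≤ L (s₂ - s₁) + C √((1+Z) ε)`. -/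
theorem empirical_quantile_stability
    (L : ℝ) (hL : 0 < L) :
    ∃ C : ℝ, 0 < C ∧
      ∀ (F f f' : ℝ → ℝ),
        (∀ b ∈ Icc (0:ℝ) 1, HasDerivWithinAt F (f b) (Icc (0:ℝ) 1) b) →
        (∀ b ∈ Icc (0:ℝ) 1, HasDerivWithinAt f (f' b) (Icc (0:ℝ) 1) b) →
        ContinuousOn f' (Icc (0:ℝ) 1) →
        StrictMonoOn F (Icc (0:ℝ) 1) →
        (∀ b ∈ Icc (0:ℝ) 1, 0 < f b) →
        (∀ b ∈ Icc (0:ℝ) 1, f b ≤ L) →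
        (∀ b ∈ Icc (0:ℝ) 1, F b * f' b ≤ (f b) ^ 2) →
        ∀ (Z : ℝ), 0 ≤ Z →
        ∀ a ∈ Icc (1:ℝ) (1 + Z),
        ∀ ε ∈ Ioc (0:ℝ) 1,
        ∀ (Fhat : ℝ → ℝ),
          MonotoneOn Fhat (Icc (0:ℝ) 1) →
          (∀ b ∈ Icc (0:ℝ) 1, Fhat b ∈ Icc (0:ℝ) 1) →
          (∀ b ∈ Icc (0:ℝ) 1, |Fhat b - F b| ≤ 2 * ε) →
        ∀ (s₁ s₂ : ℝ), -1 ≤ s₁ → s₁ ≤ s₂ → s₂ ≤ 1 + Z →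
        ∀ (b₁ b₂ : ℝ), b₁ ∈ Icc (0:ℝ) 1 → b₂ ∈ Icc (0:ℝ) 1 →
          (∀ b ∈ Icc (0:ℝ) 1, Fhat b * (s₁ - a * b) ≤ Fhat b₁ * (s₁ - a * b₁)) →
          (∀ b ∈ Icc (0:ℝ) 1, Fhat b * (s₂ - a * b) ≤ Fhat b₂ * (s₂ - a * b₂)) →
          Fhat b₂ - Fhat b₁ ≤ L * (s₂ - s₁) + C * Real.sqrt ((1 + Z) * ε) := by
  refine ⟨9 * Real.sqrt L + 4, by positivity, ?_⟩
  intro F f f' hF hf hf'c hFmono hfpos hfL hlc Z hZ a ha ε hε Fhat hFhatMono hFhatRange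
    hFhatErr s₁ s₂ hs₁ hs₁₂ hs₂ b₁ b₂ hb₁ hb₂ hmax₁ hmax₂
  have ha1 : (1:ℝ) ≤ a := ha.1
  have ha2 : a ≤ 1 + Z := ha.2
  have ha0 : (0:ℝ) < a := lt_of_lt_of_le one_pos ha1
  have hε0 : (0:ℝ) < ε := hε.1
  have hε1 : ε ≤ 1 := hε.2
  set δ : ℝ := 4 * ε * (2 + Z) with hδ
  have hδ0 : 0 < δ := by positivity
  set η : ℝ := Real.sqrt ((1 + Z) * ε) with hη
  have hη0 : 0 ≤ η := Real.sqrt_nonneg _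
  have hεη : ε ≤ η := by
    have h1 : ε ^ 2 ≤ (1 + Z) * ε := by nlinarith
    calc ε = Real.sqrt (ε ^ 2) := (Real.sqrt_sq hε0.le).symm
      _ ≤ η := Real.sqrt_le_sqrt h1
  have hσ0 : 0 ≤ s₂ - s₁ := sub_nonneg.mpr hs₁₂
  have hLσ : 0 ≤ L * (s₂ - s₁) := mul_nonneg hL.le hσ0
  have hsqL : 0 ≤ Real.sqrt L := Real.sqrt_nonneg L
  -- the deviation between Fhat and F at b₁, b₂
  have herr₁ := abs_le.mp (hFhatErr b₁ hb₁)
  have herr₂ := abs_le.mp (hFhatErr b₂ hb₂)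
  have h41 : Fhat b₂ - Fhat b₁ ≤ (F b₂ - F b₁) + 4 * ε := by linarith [herr₁.1, herr₂.2]
  -- comparison of sqrt (L * δ) with η
  set sq : ℝ := Real.sqrt (L * δ) with hsq
  have hsq0 : 0 < sq := Real.sqrt_pos.mpr (mul_pos hL hδ0)
  have hsq2 : sq ^ 2 = L * δ := Real.sq_sqrt (mul_pos hL hδ0).le
  have hs3 : sq ≤ 3 * Real.sqrt L * η := by
    have h1 : L * δ ≤ 9 * (L * ((1 + Z) * ε)) := by
      rw [hδ]
      nlinarith [mul_pos hL hε0, mul_nonneg (mul_nonneg hL.le hε0.le) hZ]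
    calc sq ≤ Real.sqrt (9 * (L * ((1 + Z) * ε))) := Real.sqrt_le_sqrt h1
      _ = 3 * Real.sqrt L * η := by
          rw [Real.sqrt_mul (by norm_num : (0:ℝ) ≤ 9), Real.sqrt_mul hL.le,
            show (9:ℝ) = 3 ^ 2 by norm_num, Real.sqrt_sq (by norm_num : (0:ℝ) ≤ 3)]
          ring
  -- approximate optimality transfers to the true F
  have htrans : ∀ s' : ℝ, -1 ≤ s' → s' ≤ 1 + Z → ∀ bi ∈ Icc (0:ℝ) 1,
      (∀ b ∈ Icc (0:ℝ) 1, Fhat b * (s' - a * b) ≤ Fhat bi * (s' - a * bi)) →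
      ∀ b ∈ Icc (0:ℝ) 1, F b * (s' - a * b) ≤ F bi * (s' - a * bi) + δ := by
    intro s' hs'l hs'u bi hbi hmax b hb
    have habs : ∀ c, c ∈ Icc (0:ℝ) 1 → |s' - a * c| ≤ 2 + Z := by
      intro c hc
      rw [abs_le]
      have hac0 : 0 ≤ a * c := mul_nonneg ha0.le hc.1
      have hac1 : a * c ≤ 1 + Z := by nlinarith [hc.2]
      constructor <;> nlinarith
    have key : ∀ c, c ∈ Icc (0:ℝ) 1 → ∀ u v : ℝ, (u = F c ∧ v = Fhat c) ∨ (u = Fhat c ∧ v = F c) →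
        u * (s' - a * c) ≤ v * (s' - a * c) + 2 * ε * (2 + Z) := by
      intro c hc u v huv
      have habs' : |u - v| ≤ 2 * ε := by
        rcases huv with ⟨hu, hv⟩ | ⟨hu, hv⟩
        · rw [hu, hv, abs_sub_comm]; exact hFhatErr c hc
        · rw [hu, hv]; exact hFhatErr c hc
      have : (u - v) * (s' - a * c) ≤ 2 * ε * (2 + Z) := by
        calc (u - v) * (s' - a * c) ≤ |(u - v) * (s' - a * c)| := le_abs_self _
          _ = |u - v| * |s' - a * c| := abs_mul _ _
          _ ≤ 2 * ε * (2 + Z) := by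
              apply mul_le_mul habs' (habs c hc) (abs_nonneg _) (by positivity)
      linarith
    have h1 : F b * (s' - a * b) ≤ Fhat b * (s' - a * b) + 2 * ε * (2 + Z) :=
      key b hb _ _ (Or.inl ⟨rfl, rfl⟩)
    have h2 : Fhat bi * (s' - a * bi) ≤ F bi * (s' - a * bi) + 2 * ε * (2 + Z) :=
      key bi hbi _ _ (Or.inr ⟨rfl, rfl⟩)
    have h3 := hmax b hb
    rw [hδ]; linarith
  -- main case split
  set d : ℝ := F b₂ - F b₁ with hd
  by_cases hcase : d ≤ sq
  · -- small movement: bound directly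
    have h6 : 0 ≤ 6 * Real.sqrt L * η := by positivity
    linarith [h41, hεη, hs3, hLσ]
  push_neg at hcase
  have hd0 : 0 < d := lt_trans hsq0 hcase
  have hFb12 : F b₁ < F b₂ := by rw [hd] at hd0; linarith
  have hb12 : b₁ < b₂ := by
    by_contra hcon
    push_neg at hcon
    rcases eq_or_lt_of_le hcon with h | h
    · rw [h] at hFb12; linarith
    · exact absurd (hFmono hb₂ hb₁ h) (by linarith)
  set lam : ℝ := sq / d with hlam
  have hlam0 : 0 < lam := div_pos hsq0 hd0
  have hlam1 : lam < 1 := (div_lt_one hd0).mpr hcase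
  have hlamd : lam * d = sq := div_mul_cancel₀ sq hd0.ne'
  have hFc : ContinuousOn F (Icc (0:ℝ) 1) := fun b hb => (hF b hb).continuousWithinAt
  have hsubb : Icc b₁ b₂ ⊆ Icc (0:ℝ) 1 := Icc_subset_Icc hb₁.1 hb₂.2
  have hFcb : ContinuousOn F (Icc b₁ b₂) := hFc.mono hsubb
  -- obtain both intermediate points
  have hmk : ∀ μ : ℝ, 0 < μ → μ < 1 → ∃ m ∈ Icc (0:ℝ) 1, b₁ < m ∧ m < b₂ ∧
      F m = (1 - μ) * F b₁ + μ * F b₂ := by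
    intro μ hμ0 hμ1
    have hd12 : 0 ≤ F b₂ - F b₁ := sub_nonneg.mpr hFb12.le
    have htm : (1 - μ) * F b₁ + μ * F b₂ ∈ Icc (F b₁) (F b₂) := by
      constructor
      · linarith [mul_nonneg hμ0.le hd12]
      · linarith [mul_nonneg (by linarith : (0:ℝ) ≤ 1 - μ) hd12]
    obtain ⟨m, hmmem, hFm⟩ := intermediate_value_Icc hb12.le hFcb htm
    have hm01 : m ∈ Icc (0:ℝ) 1 := hsubb hmmem
    have hlt1 : F b₁ < F m := by
      rw [hFm]; nlinarith [mul_pos hμ0 (sub_pos.mpr hFb12)]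
    have hlt2 : F m < F b₂ := by
      rw [hFm]; nlinarith [mul_pos (by linarith : (0:ℝ) < 1 - μ) (sub_pos.mpr hFb12)]
    refine ⟨m, hm01, ?_, ?_, hFm⟩
    · by_contra hcon; push_neg at hcon
      rcases eq_or_lt_of_le hcon with h | h
      · rw [h] at hlt1; linarith
      · exact absurd (hFmono hm01 hb₁ h) (by linarith)
    · by_contra hcon; push_neg at hcon
      rcases eq_or_lt_of_le hcon with h | h
      · rw [← h] at hlt2; linarith
      · exact absurd (hFmono hb₂ hm01 h) (by linarith)
  obtain ⟨m₁, hm₁01, hbm₁, hm₁b, hFm₁⟩ := hmk lam hlam0 hlam1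
  obtain ⟨m₂, hm₂01, hbm₂, hm₂b, hFm₂⟩ := hmk (1 - lam) (by linarith) (by linarith)
  -- strong-concavity inequalities at m₁ (signal s₁) and m₂ (signal s₂)
  have hcross₁ := K_convex L hL F f f' hF hf hFmono hfpos hfL hlc hb₁ hb₂ hbm₁ hm₁b
  have hcross₂ := K_convex L hL F f f' hF hf hFmono hfpos hfL hlc hb₁ hb₂ hbm₂ hm₂b
  have hKle₁ : m₁ * F m₁ - (F m₁)^2/(2*L) ≤
      (1 - lam) * (b₁ * F b₁ - (F b₁)^2/(2*L)) + lam * (b₂ * F b₂ - (F b₂)^2/(2*L)) := by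
    have e1 : F b₂ - F m₁ = (1 - lam) * d := by rw [hFm₁, hd]; ring
    have e2 : F m₁ - F b₁ = lam * d := by rw [hFm₁, hd]; ring
    rw [e1, e2] at hcross₁
    have h'' : ((m₁ * F m₁ - (F m₁)^2/(2*L)) - (b₁ * F b₁ - (F b₁)^2/(2*L))) * (1 - lam) * d ≤
        ((b₂ * F b₂ - (F b₂)^2/(2*L)) - (m₁ * F m₁ - (F m₁)^2/(2*L))) * lam * d := by
      linarith [hcross₁]
    have h' := le_of_mul_le_mul_right h'' hd0
    linarith [h']
  have hKle₂ : m₂ * F m₂ - (F m₂)^2/(2*L) ≤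
      (1 - (1 - lam)) * (b₁ * F b₁ - (F b₁)^2/(2*L)) + (1 - lam) * (b₂ * F b₂ - (F b₂)^2/(2*L)) := by
    have e1 : F b₂ - F m₂ = lam * d := by rw [hFm₂, hd]; ring
    have e2 : F m₂ - F b₁ = (1 - lam) * d := by rw [hFm₂, hd]; ring
    rw [e1, e2] at hcross₂
    have h'' : ((m₂ * F m₂ - (F m₂)^2/(2*L)) - (b₁ * F b₁ - (F b₁)^2/(2*L))) * lam * d ≤
        ((b₂ * F b₂ - (F b₂)^2/(2*L)) - (m₂ * F m₂ - (F m₂)^2/(2*L))) * (1 - lam) * d := by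
      linarith [hcross₂]
    have h' := le_of_mul_le_mul_right h'' hd0
    linarith [h']
  have hcomb₁ := comb_ineq L a s₁ lam (F b₁) (F b₂) (F m₁) b₁ b₂ m₁ hL ha0 hFm₁ hKle₁
  have hcomb₂ := comb_ineq L a s₂ (1 - lam) (F b₁) (F b₂) (F m₂) b₁ b₂ m₂ hL ha0
    (by rw [hFm₂]) hKle₂
  have hup₁ : F m₁ * (s₁ - a * m₁) ≤ F b₁ * (s₁ - a * b₁) + δ :=
    htrans s₁ hs₁ (le_trans hs₁₂ hs₂) b₁ hb₁ hmax₁ m₁ hm₁01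
  have hup₂ : F m₂ * (s₂ - a * m₂) ≤ F b₂ * (s₂ - a * b₂) + δ :=
    htrans s₂ (le_trans hs₁ hs₁₂) hs₂ b₂ hb₂ hmax₂ m₂ hm₂01
  -- combine: multiply out the divisions by 2L
  have h2L0 : (0:ℝ) < 2 * L := by linarith
  have hA1 : lam * (F b₁ * (s₁ - a * b₁) - F b₂ * (s₁ - a * b₂)) ≥
      (a/(2*L)) * lam * (1 - lam) * (F b₂ - F b₁)^2 - δ := by linarith [hcomb₁, hup₁]
  have hA2 : lam * (F b₂ * (s₂ - a * b₂) - F b₁ * (s₂ - a * b₁)) ≥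
      (a/(2*L)) * (1 - lam) * (1 - (1 - lam)) * (F b₂ - F b₁)^2 - δ := by
    linarith [hcomb₂, hup₂]
  have hA1' : lam * (F b₁ * (s₁ - a * b₁) - F b₂ * (s₁ - a * b₂)) ≥
      (a/(2*L)) * lam * (1 - lam) * d^2 - δ := by rw [hd]; exact hA1
  have hA2' : lam * (F b₂ * (s₂ - a * b₂) - F b₁ * (s₂ - a * b₁)) ≥
      (a/(2*L)) * (1 - lam) * (1 - (1 - lam)) * d^2 - δ := by rw [hd]; exact hA2
  have hid : (F b₁ * (s₁ - a * b₁) - F b₂ * (s₁ - a * b₂))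
      + (F b₂ * (s₂ - a * b₂) - F b₁ * (s₂ - a * b₁)) = (s₂ - s₁) * d := by
    rw [hd]; ring
  have hfin : d ≤ L * (s₂ - s₁) + 3 * sq :=
    endgame L a (s₂ - s₁) d sq δ lam _ _ _ _ hL ha1 hδ0 hsq0 hsq2 hcase hlamd
      hA1' hA2' hid
  have hsq3 : 3 * sq ≤ 9 * Real.sqrt L * η := by linarith [hs3]
  have h4 : 4 * ε ≤ 4 * η := by linarith [hεη]
  linarith [h41, hfin, hsq3, h4]
end

section
/- Let L > 0 and let F : [0,1] → ℝ be twice continuously differentiable and strictly increasing with derivative f satisfying 0 < f(b) ≤ L and F(b)·f'(b) ≤ f(b)² for all b ∈ [0,1]. Then the payment curve C(q) = q·F⁻¹(q) is (1/L)-strongly convex on the interval [F(0), F(1)]; that is, the function q ↦ q·F⁻¹(q) − q²/(2L) is convex on [F(0), F(1)]. In particular C''(q) ≥ 1/f(F⁻¹(q)) ≥ 1/L at every interior point. -/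
open Set

/-- Strong convexity of the first-price payment curve in quantile coordinates:
for an `L`-regular log-concave CDF `F` on `[0,1]` with inverse `Finv`, the payment
curve `C(q) = q · F⁻¹(q)` is `(1/L)`-strongly convex on `[F 0, F 1]`, i.e.
`q ↦ q · Finv q - q²/(2L)` is convex there; in particular its second derivative is at
least `1 / f(F⁻¹ q) ≥ 1/L` at interior points. -/
theorem payment_curve_strongly_convex
    (L : ℝ) (hL : 0 < L)
    (F f f' : ℝ → ℝ)
    (hf : ∀ b ∈ Icc (0:ℝ) 1, HasDerivWithinAt F (f b) (Icc (0:ℝ) 1) b)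
    (hf' : ∀ b ∈ Icc (0:ℝ) 1, HasDerivWithinAt f (f' b) (Icc (0:ℝ) 1) b)
    (hf'_cont : ContinuousOn f' (Icc (0:ℝ) 1))
    (hF_mono : StrictMonoOn F (Icc (0:ℝ) 1))
    (hf_pos : ∀ b ∈ Icc (0:ℝ) 1, 0 < f b)
    (hf_le : ∀ b ∈ Icc (0:ℝ) 1, f b ≤ L)
    (hlogconc : ∀ b ∈ Icc (0:ℝ) 1, F b * f' b ≤ (f b) ^ 2)
    (Finv : ℝ → ℝ)
    (hFinv_mem : ∀ q ∈ Icc (F 0) (F 1), Finv q ∈ Icc (0:ℝ) 1)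
    (hFinv : ∀ q ∈ Icc (F 0) (F 1), F (Finv q) = q) :
    ConvexOn ℝ (Icc (F 0) (F 1)) (fun q => q * Finv q - q ^ 2 / (2 * L)) ∧
    ∀ q ∈ Ioo (F 0) (F 1),
      1 / L ≤ 1 / f (Finv q) ∧
      1 / f (Finv q) ≤
        derivWithin
          (fun u => derivWithin (fun v => v * Finv v) (Icc (F 0) (F 1)) u)
          (Icc (F 0) (F 1)) q := by
  have h0 : (0:ℝ) ∈ Icc (0:ℝ) 1 := ⟨le_refl 0, zero_le_one⟩
  have h1 : (1:ℝ) ∈ Icc (0:ℝ) 1 := ⟨zero_le_one, le_refl 1⟩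
  have hF01 : F 0 < F 1 := hF_mono h0 h1 one_pos
  have hFmemS : ∀ b ∈ Icc (0:ℝ) 1, F b ∈ Icc (F 0) (F 1) := fun b hb =>
    ⟨hF_mono.monotoneOn h0 hb hb.1, hF_mono.monotoneOn hb h1 hb.2⟩
  have hFinvF : ∀ b ∈ Icc (0:ℝ) 1, Finv (F b) = b := fun b hb =>
    hF_mono.injOn (hFinv_mem _ (hFmemS b hb)) hb (hFinv _ (hFmemS b hb))
  have hFinvIoo : ∀ q ∈ Ioo (F 0) (F 1), Finv q ∈ Ioo (0:ℝ) 1 := by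
    intro q hq
    have hq' : q ∈ Icc (F 0) (F 1) := Ioo_subset_Icc_self hq
    have hm := hFinv_mem q hq'
    constructor
    · exact (hF_mono.lt_iff_lt h0 hm).mp (by rw [hFinv q hq']; exact hq.1)
    · exact (hF_mono.lt_iff_lt hm h1).mp (by rw [hFinv q hq']; exact hq.2)
  have hFinv_mono : StrictMonoOn Finv (Icc (F 0) (F 1)) := by
    intro a ha b hb hab
    by_contra h
    push_neg at h
    have := hF_mono.monotoneOn (hFinv_mem b hb) (hFinv_mem a ha) h
    rw [hFinv a ha, hFinv b hb] at this
    exact absurd hab (not_lt.mpr this)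
  have hFinv_surj : Icc (0:ℝ) 1 ⊆ Finv '' (Icc (F 0) (F 1)) := fun b hb =>
    ⟨F b, hFmemS b hb, hFinvF b hb⟩
  have hFinv_contAt : ∀ q ∈ Ioo (F 0) (F 1), ContinuousAt Finv q := by
    intro q hq
    apply hFinv_mono.continuousAt_of_image_mem_nhds (Icc_mem_nhds hq.1 hq.2)
    exact Filter.mem_of_superset
      (Icc_mem_nhds (hFinvIoo q hq).1 (hFinvIoo q hq).2) hFinv_surj
  have hFinv0 : Finv (F 0) = 0 := hFinvF 0 h0
  have hFinv1 : Finv (F 1) = 1 := hFinvF 1 h1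
  have hFinv_cont : ContinuousOn Finv (Icc (F 0) (F 1)) := by
    intro q hq
    rcases eq_or_lt_of_le hq.1 with hq0 | hq0
    · have : ContinuousWithinAt Finv (Ici (F 0)) (F 0) := by
        apply hFinv_mono.continuousWithinAt_right_of_image_mem_nhdsWithin
          (Icc_mem_nhdsGE_of_mem ⟨le_refl _, hF01⟩)
        rw [hFinv0]
        exact Filter.mem_of_superset
          (Icc_mem_nhdsGE_of_mem ⟨le_refl _, one_pos⟩) hFinv_surj
      rw [← hq0]
      exact this.mono Icc_subset_Ici_self
    rcases eq_or_lt_of_le hq.2 with hq1 | hq1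
    · have : ContinuousWithinAt Finv (Iic (F 1)) (F 1) := by
        apply hFinv_mono.continuousWithinAt_left_of_image_mem_nhdsWithin
          (Icc_mem_nhdsLE_of_mem ⟨hF01, le_refl _⟩)
        rw [hFinv1]
        exact Filter.mem_of_superset
          (Icc_mem_nhdsLE_of_mem ⟨one_pos, le_refl _⟩) hFinv_surj
      rw [hq1]
      exact this.mono Icc_subset_Iic_self
    · exact (hFinv_contAt q ⟨hq0, hq1⟩).continuousWithinAt
  have hIccNhds : ∀ b ∈ Ioo (0:ℝ) 1, Icc (0:ℝ) 1 ∈ nhds b := fun b hb =>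
    Icc_mem_nhds hb.1 hb.2
  -- derivative of Finv
  have hFderiv : ∀ q ∈ Ioo (F 0) (F 1), HasDerivAt Finv (f (Finv q))⁻¹ q := by
    intro q hq
    have hb := hFinvIoo q hq
    have hbI : Finv q ∈ Icc (0:ℝ) 1 := Ioo_subset_Icc_self hb
    have hFd : HasDerivAt F (f (Finv q)) (Finv q) :=
      (hf _ hbI).hasDerivAt (hIccNhds _ hb)
    refine HasDerivAt.of_local_left_inverse (hFinv_contAt q hq) hFd
      (ne_of_gt (hf_pos _ hbI)) ?_
    filter_upwards [Icc_mem_nhds hq.1 hq.2] with x hx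
    exact hFinv x hx
  -- derivative of the payment curve C
  have hCderiv : ∀ q ∈ Ioo (F 0) (F 1),
      HasDerivAt (fun v => v * Finv v) (Finv q + q * (f (Finv q))⁻¹) q := by
    intro q hq
    have := (hasDerivAt_id q).mul (hFderiv q hq)
    exact this.congr_deriv (by simp)
  -- second derivative of C
  set ψ : ℝ → ℝ := fun q =>
    (f (Finv q))⁻¹ +
      ((f (Finv q))⁻¹ + q * (-(f' (Finv q) * (f (Finv q))⁻¹) / f (Finv q) ^ 2))
    with hψdef
  have hφderiv : ∀ q ∈ Ioo (F 0) (F 1),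
      HasDerivAt (fun u => Finv u + u * (f (Finv u))⁻¹) (ψ q) q := by
    intro q hq
    have hb := hFinvIoo q hq
    have hbI : Finv q ∈ Icc (0:ℝ) 1 := Ioo_subset_Icc_self hb
    have hfd : HasDerivAt f (f' (Finv q)) (Finv q) :=
      (hf' _ hbI).hasDerivAt (hIccNhds _ hb)
    have hcomp : HasDerivAt (fun u => f (Finv u))
        (f' (Finv q) * (f (Finv q))⁻¹) q := hfd.comp q (hFderiv q hq)
    have hinv : HasDerivAt (fun u => (f (Finv u))⁻¹)
        (-(f' (Finv q) * (f (Finv q))⁻¹) / f (Finv q) ^ 2) q :=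
      hcomp.inv (ne_of_gt (hf_pos _ hbI))
    have := (hFderiv q hq).add ((hasDerivAt_id q).mul hinv)
    exact this.congr_deriv (by simp [hψdef])
  -- the key inequality ψ q ≥ 1 / f (Finv q)
  have hψ_ge : ∀ q ∈ Ioo (F 0) (F 1), (f (Finv q))⁻¹ ≤ ψ q := by
    intro q hq
    have hb := hFinvIoo q hq
    have hbI : Finv q ∈ Icc (0:ℝ) 1 := Ioo_subset_Icc_self hb
    have hfb : 0 < f (Finv q) := hf_pos _ hbI
    have hq' : q ∈ Icc (F 0) (F 1) := Ioo_subset_Icc_self hq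
    have hqf : q * f' (Finv q) ≤ f (Finv q) ^ 2 := by
      have := hlogconc _ hbI
      rwa [hFinv q hq'] at this
    have hkey : (f (Finv q))⁻¹ +
        q * (-(f' (Finv q) * (f (Finv q))⁻¹) / f (Finv q) ^ 2)
        = (f (Finv q) ^ 2 - q * f' (Finv q)) / f (Finv q) ^ 3 := by
      field_simp
      ring
    have h3 : (0:ℝ) < f (Finv q) ^ 3 := by positivity
    have hnn : 0 ≤ (f (Finv q) ^ 2 - q * f' (Finv q)) / f (Finv q) ^ 3 :=
      div_nonneg (sub_nonneg.mpr hqf) h3.le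
    rw [hψdef]
    simp only
    nlinarith [hnn, hkey]
  have hIntIcc : interior (Icc (F 0) (F 1)) = Ioo (F 0) (F 1) := interior_Icc
  have hUD : UniqueDiffOn ℝ (Icc (F 0) (F 1)) := uniqueDiffOn_Icc hF01
  -- convexity
  have hconv : ConvexOn ℝ (Icc (F 0) (F 1))
      (fun q => q * Finv q - q ^ 2 / (2 * L)) := by
    apply convexOn_of_hasDerivWithinAt2_nonneg (convex_Icc _ _)
      (f' := fun q => Finv q + q * (f (Finv q))⁻¹ - q / L)
      (f'' := fun q => ψ q - 1 / L)
    · exact (continuousOn_id.mul hFinv_cont).sub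
        ((continuousOn_pow 2).div_const (2 * L))
    · intro x hx
      rw [hIntIcc] at hx ⊢
      have h2 : HasDerivAt (fun q : ℝ => q ^ 2 / (2 * L)) (x / L) x := by
        have := (hasDerivAt_pow 2 x).div_const (2 * L)
        refine this.congr_deriv ?_
        rw [div_eq_div_iff (by positivity) hL.ne']
        norm_num only [pow_one]
        ring
      exact ((hCderiv x hx).sub h2).hasDerivWithinAt
    · intro x hx
      rw [hIntIcc] at hx ⊢
      have h2 : HasDerivAt (fun q : ℝ => q / L) (1 / L) x := by
        simpa using (hasDerivAt_id x).div_const L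
      exact ((hφderiv x hx).sub h2).hasDerivWithinAt
    · intro x hx
      rw [hIntIcc] at hx
      have hb := hFinvIoo x hx
      have hbI : Finv x ∈ Icc (0:ℝ) 1 := Ioo_subset_Icc_self hb
      have h1 : 1 / L ≤ 1 / f (Finv x) :=
        one_div_le_one_div_of_le (hf_pos _ hbI) (hf_le _ hbI)
      have h2 := hψ_ge x hx
      rw [one_div, one_div] at h1
      rw [one_div]
      linarith
  refine ⟨hconv, ?_⟩
  intro q hq
  have hb := hFinvIoo q hq
  have hbI : Finv q ∈ Icc (0:ℝ) 1 := Ioo_subset_Icc_self hb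
  have hqS : q ∈ Icc (F 0) (F 1) := Ioo_subset_Icc_self hq
  constructor
  · exact one_div_le_one_div_of_le (hf_pos _ hbI) (hf_le _ hbI)
  · have hEq : derivWithin
        (fun u => derivWithin (fun v => v * Finv v) (Icc (F 0) (F 1)) u)
        (Icc (F 0) (F 1)) q
        = derivWithin (fun u => Finv u + u * (f (Finv u))⁻¹)
            (Icc (F 0) (F 1)) q := by
      apply Filter.EventuallyEq.derivWithin_eq
      · have hmem : Ioo (F 0) (F 1) ∈ nhdsWithin q (Icc (F 0) (F 1)) :=
          mem_nhdsWithin_of_mem_nhds (Ioo_mem_nhds hq.1 hq.2)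
        filter_upwards [hmem] with u hu
        exact ((hCderiv u hu).hasDerivWithinAt).derivWithin
          (hUD u (Ioo_subset_Icc_self hu))
      · exact ((hCderiv q hq).hasDerivWithinAt).derivWithin (hUD q hqS)
    rw [hEq, ((hφderiv q hq).hasDerivWithinAt).derivWithin (hUD q hqS), one_div]
    exact hψ_ge q hq
end

section
/- Let I ⊆ ℝ be a convex set, m > 0, δ ≥ 0, and let g, ĝ : I → ℝ satisfy |g(q) − ĝ(q)| ≤ δ for every q ∈ I. Suppose g is m-strongly concave on I, q* ∈ I maximizes g over I, and q̂ ∈ I maximizes ĝ over I. Then |q̂ − q*| ≤ 2·√(δ/m). -/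
open Set

/-- Approximate-argmax stability: if `g` is `m`-strongly concave on a convex set `I`,
`ĝ` is a uniform `δ`-perturbation of `g`, `q⋆` maximizes `g` over `I`, and `q̂`
maximizes `ĝ` over `I`, then `|q̂ - q⋆| ≤ 2 √(δ/m)`. -/
theorem approximate_argmax_stability
    (I : Set ℝ) (hI : Convex ℝ I)
    (m : ℝ) (hm : 0 < m)
    (δ : ℝ) (hδ : 0 ≤ δ)
    (g ghat : ℝ → ℝ)
    (hclose : ∀ q ∈ I, |g q - ghat q| ≤ δ)
    (hconc : ∀ q ∈ I, ∀ q' ∈ I, ∀ lam ∈ Icc (0:ℝ) 1,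
      lam * g q + (1 - lam) * g q' + (m / 2) * lam * (1 - lam) * (q - q') ^ 2 ≤
        g (lam * q + (1 - lam) * q'))
    (qstar : ℝ) (hqstar : qstar ∈ I) (hmax : ∀ q ∈ I, g q ≤ g qstar)
    (qhat : ℝ) (hqhat : qhat ∈ I) (hmaxhat : ∀ q ∈ I, ghat q ≤ ghat qhat) :
    |qhat - qstar| ≤ 2 * Real.sqrt (δ / m) := by
  -- key inequality for every 0 < lam ≤ 1
  have key : ∀ lam : ℝ, 0 < lam → lam ≤ 1 →
      g qhat + (m / 2) * (1 - lam) * (qhat - qstar) ^ 2 ≤ g qstar := by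
    intro lam hl0 hl1
    have hmem : lam * qhat + (1 - lam) * qstar ∈ I :=
      hI hqhat hqstar (le_of_lt hl0) (by linarith) (by ring)
    have h1 := hconc qhat hqhat qstar hqstar lam ⟨le_of_lt hl0, hl1⟩
    have h2 := hmax _ hmem
    have h3 : lam * g qhat + (1 - lam) * g qstar
        + (m / 2) * lam * (1 - lam) * (qhat - qstar) ^ 2 ≤ g qstar := le_trans h1 h2
    nlinarith
  -- generalize the squared distance
  obtain ⟨D, hD⟩ : ∃ D, (qhat - qstar) ^ 2 = D := ⟨_, rfl⟩
  have hDnn : 0 ≤ D := hD ▸ sq_nonneg _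
  rw [hD] at key
  -- pass to lam → 0: g qhat + (m/2) D ≤ g qstar
  have hlim : g qhat + (m / 2) * D ≤ g qstar := by
    by_contra h
    push_neg at h
    have hDpos : 0 < D := by
      by_contra h'
      push_neg at h'
      have h0 : D = 0 := le_antisymm h' hDnn
      have h4 := key 1 one_pos le_rfl
      rw [h0] at h4 h
      linarith
    have hc : 0 < m / 2 * D := by positivity
    have hεpos : 0 < g qhat + m / 2 * D - g qstar := by linarith
    obtain ⟨lam, hl0, hl1, hsmall⟩ :
        ∃ lam : ℝ, 0 < lam ∧ lam ≤ 1 ∧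
          lam * (m / 2 * D) < g qhat + m / 2 * D - g qstar := by
      refine ⟨min 1 ((g qhat + m / 2 * D - g qstar) / (m / 2 * D) / 2),
        lt_min one_pos (by positivity), min_le_left _ _, ?_⟩
      calc min 1 ((g qhat + m / 2 * D - g qstar) / (m / 2 * D) / 2) * (m / 2 * D)
          ≤ ((g qhat + m / 2 * D - g qstar) / (m / 2 * D) / 2) * (m / 2 * D) :=
            mul_le_mul_of_nonneg_right (min_le_right _ _) (le_of_lt hc)
        _ = (g qhat + m / 2 * D - g qstar) / 2 := by
            field_simp
        _ < g qhat + m / 2 * D - g qstar := by linarith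
    have h4 := key lam hl0 hl1
    nlinarith
  -- closeness: g qstar - g qhat ≤ 2δ
  have hcl1 := hclose qstar hqstar
  have hcl2 := hclose qhat hqhat
  have hm1 := hmaxhat qstar hqstar
  rw [abs_le] at hcl1 hcl2
  have hgap : g qstar - g qhat ≤ 2 * δ := by linarith [hcl1.1, hcl1.2, hcl2.1, hcl2.2]
  -- combine
  have hDle : D ≤ 4 * (δ / m) := by
    rw [show (4:ℝ) * (δ / m) = 4 * δ / m by ring, le_div_iff₀ hm]
    nlinarith
  calc |qhat - qstar| = Real.sqrt D := by rw [← hD, Real.sqrt_sq_eq_abs]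
    _ ≤ Real.sqrt (4 * (δ / m)) := Real.sqrt_le_sqrt hDle
    _ = 2 * Real.sqrt (δ / m) := by
        rw [show (4 : ℝ) * (δ / m) = 2 ^ 2 * (δ / m) by ring,
          Real.sqrt_mul (by positivity), Real.sqrt_sq (by norm_num)]
end

section
/- There exist universal constants C₀ > 0 and C₁ > 0 with the following property. Let (Ω, 𝔽, P) be a probability space, let W ⊆ Ω be a measurable event with p = P(W), and let v₀, v₁ : Ω → ℝ be measurable with values in [0,1] such that the pair (v₀, v₁) is independent of the indicator of W. Let ε ∈ (0,1] and p̂ ∈ (0,1) satisfy |p̂ − p| ≤ ε·√(p·(1−p)) + ε². Define the truncated inverse-propensity-weighted pseudo-outcome ỹ = 1_W · v₁ / max(ε², p̂) − 1_{Wᶜ} · v₀ / max(ε², 1 − p̂), and set σ² = 1/(p̂·(1−p̂)). Then |E[ỹ] − E[v₁ − v₀]| ≤ C₀·ε·σ and Var(ỹ) ≤ C₁·σ². -/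
open MeasureTheory ProbabilityTheory Set

lemma ipw_oneside {p q ε : ℝ} (hp0 : 0 ≤ p) (hp1 : p ≤ 1) (hq0 : 0 < q) (hq1 : q < 1)
    (hε0 : 0 < ε) (hε1 : ε ≤ 1)
    (hor : |q - p| ≤ ε * Real.sqrt (p * (1 - p)) + ε ^ 2) :
    |p / max (ε ^ 2) q - 1| ≤ 6 * ε / Real.sqrt (q * (1 - q)) ∧
      p / (max (ε ^ 2) q) ^ 2 ≤ 6 / (q * (1 - q)) := by
  set s := Real.sqrt (p * (1 - p)) with hs
  set t := Real.sqrt (q * (1 - q)) with ht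
  have hs0 : 0 ≤ s := Real.sqrt_nonneg _
  have ht0 : 0 < t := Real.sqrt_pos.mpr (mul_pos hq0 (by linarith))
  have hs2 : s ^ 2 = p * (1 - p) := Real.sq_sqrt (mul_nonneg hp0 (by linarith))
  have ht2 : t ^ 2 = q * (1 - q) := Real.sq_sqrt (mul_nonneg hq0.le (by linarith))
  have habs := abs_le.mp hor
  have key : (p - q) * (1 - p - q) ≤ |q - p| := by
    calc (p - q) * (1 - p - q) ≤ |(p - q) * (1 - p - q)| := le_abs_self _
      _ = |p - q| * |1 - p - q| := abs_mul _ _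
      _ ≤ |p - q| * 1 :=
          mul_le_mul_of_nonneg_left (abs_le.mpr ⟨by linarith, by linarith⟩) (abs_nonneg _)
      _ = |q - p| := by rw [mul_one, abs_sub_comm]
  have hd : s ^ 2 - t ^ 2 = (p - q) * (1 - p - q) := by rw [hs2, ht2]; ring
  have h1 : s ^ 2 ≤ t ^ 2 + ε * s + ε ^ 2 := by linarith
  have hst : s ≤ t + 2 * ε := by
    by_contra hcon
    push_neg at hcon
    have hs_pos : 0 < s := by nlinarith
    nlinarith [mul_lt_mul_of_pos_right hcon hs_pos, mul_lt_mul_of_pos_left hcon ht0,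
      mul_lt_mul_of_pos_left hcon hε0, mul_pos ht0 hε0]
  have hεs : ε * s ≤ ε * (t + 2 * ε) := mul_le_mul_of_nonneg_left hst hε0.le
  have hpu : p ≤ q + ε * t + 3 * ε ^ 2 := by nlinarith [habs.1]
  have hdq : |q - p| ≤ ε * t + 3 * ε ^ 2 := by nlinarith
  rcases le_or_gt q (ε ^ 2) with hq | hq
  · -- q ≤ ε², max = ε²
    rw [max_eq_left hq]
    have htε : t ≤ ε := by
      by_contra hc
      push_neg at hc
      nlinarith [mul_lt_mul_of_pos_left hc ht0, mul_lt_mul_of_pos_left hc hε0]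
    have hεt : 1 ≤ ε / t := (one_le_div ht0).mpr htε
    have hp5 : p ≤ 5 * ε ^ 2 := by nlinarith [mul_le_mul_of_nonneg_left htε hε0.le]
    have hε2 : (0:ℝ) < ε ^ 2 := by positivity
    constructor
    · have hnn : 0 ≤ p / ε ^ 2 := by positivity
      have hub : p / ε ^ 2 ≤ 5 := (div_le_iff₀ hε2).mpr (by linarith)
      have h4 : |p / ε ^ 2 - 1| ≤ 4 := abs_le.mpr ⟨by linarith, by linarith⟩
      calc |p / ε ^ 2 - 1| ≤ 4 := h4
        _ ≤ 6 * (ε / t) := by linarith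
        _ = 6 * ε / t := by ring
    · rw [div_le_div_iff₀ (by positivity) (mul_pos hq0 (by linarith)), ← ht2]
      have ht2ε : t ^ 2 ≤ ε ^ 2 := pow_le_pow_left₀ ht0.le htε 2
      nlinarith [mul_le_mul hp5 ht2ε (sq_nonneg t) (by positivity : (0:ℝ) ≤ 5 * ε ^ 2),
        sq_nonneg (ε ^ 2)]
  · -- ε² < q, max = q
    rw [max_eq_right hq.le]
    have hεq : ε ^ 2 ≤ q := hq.le
    have ht2q : t ^ 2 ≤ q := by
      rw [ht2]
      calc q * (1 - q) ≤ q * 1 := mul_le_mul_of_nonneg_left (by linarith) hq0.le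
        _ = q := mul_one q
    have hεtq : ε * t ≤ q := by linarith [two_mul_le_add_sq ε t]
    constructor
    · have heq : p / q - 1 = (p - q) / q := div_sub_one hq0.ne'
      rw [heq, abs_div, abs_of_pos hq0, div_le_div_iff₀ hq0 ht0, abs_sub_comm]
      calc |q - p| * t ≤ (ε * t + 3 * ε ^ 2) * t := mul_le_mul_of_nonneg_right hdq ht0.le
        _ = ε * t ^ 2 + 3 * (ε * (ε * t)) := by ring
        _ ≤ ε * q + 3 * (ε * q) := by
            linarith [mul_le_mul_of_nonneg_left ht2q hε0.le,
              mul_le_mul_of_nonneg_left hεtq hε0.le]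
        _ ≤ 6 * ε * q := by linarith [mul_pos hε0 hq0]
    · rw [div_le_div_iff₀ (by positivity) (mul_pos hq0 (by linarith)), ← ht2]
      have hp5 : p ≤ 5 * q := by linarith
      calc p * t ^ 2 ≤ 5 * q * q := mul_le_mul hp5 ht2q (sq_nonneg t) (by positivity)
        _ ≤ 6 * q ^ 2 := by linarith [sq_nonneg q]

/-- IPW bias-and-variance lemma at a single round: there are universal constants
`C₀, C₁` such that the truncated inverse-propensity-weighted pseudo-outcome
`ỹ = 1_W v₁ / max(ε², p̂) - 1_{Wᶜ} v₀ / max(ε², 1-p̂)`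
satisfies `|E ỹ - E (v₁ - v₀)| ≤ C₀ ε σ` and `Var ỹ ≤ C₁ σ²`, where
`σ² = 1/(p̂(1-p̂))`. -/
theorem ipw_bias_variance :
    ∃ C₀ : ℝ, 0 < C₀ ∧ ∃ C₁ : ℝ, 0 < C₁ ∧
      ∀ (Ω : Type) (_ : MeasurableSpace Ω) (P : Measure Ω), IsProbabilityMeasure P →
      ∀ (W : Set Ω), MeasurableSet W →
      ∀ (v₀ v₁ : Ω → ℝ), Measurable v₀ → Measurable v₁ →
        (∀ ω, v₀ ω ∈ Icc (0:ℝ) 1) → (∀ ω, v₁ ω ∈ Icc (0:ℝ) 1) →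
        IndepFun (fun ω => (v₀ ω, v₁ ω)) (W.indicator (fun _ => (1 : ℝ))) P →
      ∀ (ε phat : ℝ), ε ∈ Ioc (0:ℝ) 1 → phat ∈ Ioo (0:ℝ) 1 →
        |phat - (P W).toReal| ≤
            ε * Real.sqrt ((P W).toReal * (1 - (P W).toReal)) + ε ^ 2 →
        (|(∫ ω, (W.indicator (fun ω' => v₁ ω' / max (ε ^ 2) phat) ω
              - Wᶜ.indicator (fun ω' => v₀ ω' / max (ε ^ 2) (1 - phat)) ω) ∂P)
            - ∫ ω, (v₁ ω - v₀ ω) ∂P| ≤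
            C₀ * ε * Real.sqrt (1 / (phat * (1 - phat)))) ∧
          variance (fun ω => W.indicator (fun ω' => v₁ ω' / max (ε ^ 2) phat) ω
              - Wᶜ.indicator (fun ω' => v₀ ω' / max (ε ^ 2) (1 - phat)) ω) P ≤
            C₁ * (1 / (phat * (1 - phat))) := by
  refine ⟨12, by norm_num, 12, by norm_num, ?_⟩
  intro Ω mΩ P hP W hW v₀ v₁ hv₀m hv₁m hv₀b hv₁b hind ε phat hε hph hor
  obtain ⟨hε0, hε1⟩ := hε
  obtain ⟨hq0, hq1⟩ := hph
  set p := (P W).toReal with hpdef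
  have hp0 : 0 ≤ p := ENNReal.toReal_nonneg
  have hp1 : p ≤ 1 := by
    simpa using ENNReal.toReal_mono ENNReal.one_ne_top (prob_le_one (μ := P) (s := W))
  set m₁ := max (ε ^ 2) phat with hm₁def
  set m₀ := max (ε ^ 2) (1 - phat) with hm₀def
  have hm₁ : 0 < m₁ := lt_of_lt_of_le (by positivity) (le_max_left _ _)
  have hm₀ : 0 < m₀ := lt_of_lt_of_le (by positivity) (le_max_left _ _)
  obtain ⟨hb1, hvv1⟩ := ipw_oneside hp0 hp1 hq0 hq1 hε0 hε1 hor
  have hor' : |(1 - phat) - (1 - p)| ≤ ε * Real.sqrt ((1 - p) * (1 - (1 - p))) + ε ^ 2 := by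
    have h1 : (1 - phat) - (1 - p) = -(phat - p) := by ring
    have h2 : (1 - p) * (1 - (1 - p)) = p * (1 - p) := by ring
    rw [h1, abs_neg, h2]; exact hor
  obtain ⟨hb0, hvv0⟩ := ipw_oneside (by linarith : (0:ℝ) ≤ 1 - p) (by linarith)
    (by linarith : (0:ℝ) < 1 - phat) (by linarith) hε0 hε1 hor'
  rw [show (1 - phat) * (1 - (1 - phat)) = phat * (1 - phat) by ring] at hb0 hvv0
  rw [← hm₁def] at hb1 hvv1
  rw [← hm₀def] at hb0 hvv0
  set t := Real.sqrt (phat * (1 - phat)) with htdef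
  have ht0 : 0 < t := Real.sqrt_pos.mpr (mul_pos hq0 (by linarith))
  have hσ : Real.sqrt (1 / (phat * (1 - phat))) = 1 / t := by
    rw [one_div, Real.sqrt_inv, one_div]
  -- integrability helper
  have hbdd : ∀ (f : Ω → ℝ) (C : ℝ), Measurable f → (∀ ω, |f ω| ≤ C) → Integrable f P :=
    fun f C hm hb => ⟨hm.aestronglyMeasurable,
      HasFiniteIntegral.of_bounded (C := C) (Filter.Eventually.of_forall fun ω => by
        rw [Real.norm_eq_abs]; exact hb ω)⟩
  set I : Ω → ℝ := W.indicator (fun _ => (1:ℝ)) with hI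
  have hIm : Measurable I := measurable_const.indicator hW
  have hI01 : ∀ ω, 0 ≤ I ω ∧ I ω ≤ 1 := by
    intro ω; by_cases h : ω ∈ W <;> simp [hI, Set.indicator_apply, h]
  have hIabs : ∀ ω, |I ω| ≤ 1 := fun ω =>
    abs_le.mpr ⟨by linarith [(hI01 ω).1], (hI01 ω).2⟩
  have hIint : ∫ ω, I ω ∂P = p := by
    rw [hI, integral_indicator_const (1:ℝ) hW]; simp [hpdef, measureReal_def]
  have hII : Integrable I P := hbdd I 1 hIm hIabs
  have hiv₁ : Integrable v₁ P :=
    hbdd v₁ 1 hv₁m fun ω => abs_le.mpr ⟨by linarith [(hv₁b ω).1], (hv₁b ω).2⟩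
  have hiv₀ : Integrable v₀ P :=
    hbdd v₀ 1 hv₀m fun ω => abs_le.mpr ⟨by linarith [(hv₀b ω).1], (hv₀b ω).2⟩
  have hind₁ : IndepFun v₁ I P := by
    have h := hind.comp (φ := fun x : ℝ × ℝ => x.2) (ψ := id) measurable_snd measurable_id
    exact h
  have hind₀ : IndepFun v₀ I P := by
    have h := hind.comp (φ := fun x : ℝ × ℝ => x.1) (ψ := id) measurable_fst measurable_id
    exact h
  have hprod₁ : ∫ ω, v₁ ω * I ω ∂P = (∫ ω, v₁ ω ∂P) * p := by
    have h := hind₁.integral_mul_eq_mul_integral hiv₁.aestronglyMeasurable hII.aestronglyMeasurable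
    simpa [Pi.mul_apply, hIint] using h
  have hprod₀ : ∫ ω, v₀ ω * I ω ∂P = (∫ ω, v₀ ω ∂P) * p := by
    have h := hind₀.integral_mul_eq_mul_integral hiv₀.aestronglyMeasurable hII.aestronglyMeasurable
    simpa [Pi.mul_apply, hIint] using h
  set gf : Ω → ℝ := fun ω => W.indicator (fun ω' => v₁ ω' / m₁) ω
      - Wᶜ.indicator (fun ω' => v₀ ω' / m₀) ω with hgf
  have hg : ∀ ω, gf ω = v₁ ω * I ω / m₁ - v₀ ω * (1 - I ω) / m₀ := by
    intro ω
    by_cases h : ω ∈ W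
    · simp [hgf, hI, Set.indicator_apply, h]
    · simp [hgf, hI, Set.indicator_apply, h]
  have hv1I : ∀ ω, |v₁ ω * I ω| ≤ 1 := fun ω => by
    rw [abs_mul]
    exact mul_le_one₀ (abs_le.mpr ⟨by linarith [(hv₁b ω).1], (hv₁b ω).2⟩)
      (abs_nonneg _) (hIabs ω)
  have hv0I : ∀ ω, |v₀ ω * (1 - I ω)| ≤ 1 := fun ω => by
    rw [abs_mul]
    refine mul_le_one₀ (abs_le.mpr ⟨by linarith [(hv₀b ω).1], (hv₀b ω).2⟩) (abs_nonneg _) ?_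
    rcases hI01 ω with ⟨h1, h2⟩
    rw [abs_le]; constructor <;> linarith
  have hint1 : Integrable (fun ω => v₁ ω * I ω / m₁) P :=
    hbdd _ (1 / m₁) ((hv₁m.mul hIm).div_const m₁) fun ω => by
      rw [abs_div, abs_of_pos hm₁]
      exact (div_le_div_iff_of_pos_right hm₁).mpr (hv1I ω)
  have hint0 : Integrable (fun ω => v₀ ω * (1 - I ω) / m₀) P :=
    hbdd _ (1 / m₀) ((hv₀m.mul (measurable_const.sub hIm)).div_const m₀) fun ω => by
      rw [abs_div, abs_of_pos hm₀]
      exact (div_le_div_iff_of_pos_right hm₀).mpr (hv0I ω)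
  have e1 : ∫ ω, v₁ ω * I ω / m₁ ∂P = (∫ ω, v₁ ω ∂P) * p / m₁ := by
    rw [integral_div, hprod₁]
  have e2 : ∫ ω, v₀ ω * (1 - I ω) / m₀ ∂P = (∫ ω, v₀ ω ∂P) * (1 - p) / m₀ := by
    rw [integral_div]
    have h : (fun ω => v₀ ω * (1 - I ω)) = fun ω => v₀ ω - v₀ ω * I ω := by
      funext ω; ring
    rw [h, integral_sub hiv₀ (hbdd (fun ω => v₀ ω * I ω) 1 (hv₀m.mul hIm) fun ω => by
      rw [abs_mul]
      exact mul_le_one₀ (abs_le.mpr ⟨by linarith [(hv₀b ω).1], (hv₀b ω).2⟩)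
        (abs_nonneg _) (hIabs ω)), hprod₀]
    ring
  have hEg : ∫ ω, gf ω ∂P
      = (∫ ω, v₁ ω ∂P) * p / m₁ - (∫ ω, v₀ ω ∂P) * (1 - p) / m₀ := by
    rw [integral_congr_ae (Filter.Eventually.of_forall fun ω => hg ω),
      integral_sub hint1 hint0, e1, e2]
  set E1 := ∫ ω, v₁ ω ∂P with hE1def
  set E0 := ∫ ω, v₀ ω ∂P with hE0def
  have hE1n : 0 ≤ E1 := integral_nonneg fun ω => (hv₁b ω).1
  have hE0n : 0 ≤ E0 := integral_nonneg fun ω => (hv₀b ω).1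
  have hE1u : E1 ≤ 1 := by
    calc E1 ≤ ∫ _ω, (1:ℝ) ∂P := integral_mono hiv₁ (integrable_const 1) fun ω => (hv₁b ω).2
      _ = 1 := by simp
  have hE0u : E0 ≤ 1 := by
    calc E0 ≤ ∫ _ω, (1:ℝ) ∂P := integral_mono hiv₀ (integrable_const 1) fun ω => (hv₀b ω).2
      _ = 1 := by simp
  have tri : ∀ a b : ℝ, |a - b| ≤ |a| + |b| := fun a b => by
    rw [sub_eq_add_neg]
    exact (abs_add_le a (-b)).trans (by rw [abs_neg])
  constructor
  · -- bias bound
    rw [hEg, integral_sub hiv₁ hiv₀, hσ, ← hE1def, ← hE0def]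
    have harg : E1 * p / m₁ - E0 * (1 - p) / m₀ - (E1 - E0)
        = E1 * (p / m₁ - 1) - E0 * ((1 - p) / m₀ - 1) := by ring
    rw [harg]
    calc |E1 * (p / m₁ - 1) - E0 * ((1 - p) / m₀ - 1)|
        ≤ |E1 * (p / m₁ - 1)| + |E0 * ((1 - p) / m₀ - 1)| := tri _ _
      _ ≤ 1 * (6 * ε / t) + 1 * (6 * ε / t) := by
          refine add_le_add ?_ ?_ <;> rw [abs_mul]
          · exact mul_le_mul (abs_le.mpr ⟨by linarith, hE1u⟩) hb1 (abs_nonneg _) (by norm_num)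
          · exact mul_le_mul (abs_le.mpr ⟨by linarith, hE0u⟩) hb0 (abs_nonneg _) (by norm_num)
      _ = 12 * ε * (1 / t) := by ring
  · -- variance bound
    have hgm : Measurable gf :=
      ((hv₁m.div_const m₁).indicator hW).sub ((hv₀m.div_const m₀).indicator hW.compl)
    have hvar := variance_le_expectation_sq (μ := P) (X := gf) hgm.aestronglyMeasurable
    have hgabs : ∀ ω, |gf ω| ≤ 1 / m₁ + 1 / m₀ := by
      intro ω
      rw [hg ω]
      refine (tri _ _).trans (add_le_add ?_ ?_)
      · rw [abs_div, abs_of_pos hm₁]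
        exact (div_le_div_iff_of_pos_right hm₁).mpr (hv1I ω)
      · rw [abs_div, abs_of_pos hm₀]
        exact (div_le_div_iff_of_pos_right hm₀).mpr (hv0I ω)
    have hg2int : Integrable (gf ^ 2) P :=
      hbdd _ ((1 / m₁ + 1 / m₀) ^ 2) (hgm.pow_const 2) fun ω => by
        have h : (gf ^ 2) ω = gf ω ^ 2 := rfl
        rw [h, abs_pow]
        exact pow_le_pow_left₀ (abs_nonneg _) (hgabs ω) 2
    have hsq : ∀ ω, (gf ^ 2) ω ≤ W.indicator (fun _ => 1 / m₁ ^ 2) ω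
        + Wᶜ.indicator (fun _ => 1 / m₀ ^ 2) ω := by
      intro ω
      have h : (gf ^ 2) ω = gf ω ^ 2 := rfl
      rw [h, hg ω]
      by_cases hω : ω ∈ W
      · have hIω : I ω = 1 := by simp [hI, Set.indicator_apply, hω]
        rw [Set.indicator_of_mem hω, Set.indicator_of_notMem (by simpa using hω)]
        rw [hIω]
        have hb := hv₁b ω
        have h2 : v₁ ω ^ 2 ≤ 1 := pow_le_one₀ hb.1 hb.2
        have : (v₁ ω * 1 / m₁ - v₀ ω * (1 - 1) / m₀) ^ 2 = v₁ ω ^ 2 / m₁ ^ 2 := by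
          field_simp
          ring
        rw [this, add_zero]
        exact (div_le_div_iff_of_pos_right (by positivity)).mpr h2
      · have hIω : I ω = 0 := by simp [hI, Set.indicator_apply, hω]
        rw [Set.indicator_of_notMem hω, Set.indicator_of_mem (by simpa using hω)]
        rw [hIω]
        have hb := hv₀b ω
        have h2 : v₀ ω ^ 2 ≤ 1 := pow_le_one₀ hb.1 hb.2
        have : (v₁ ω * 0 / m₁ - v₀ ω * (1 - 0) / m₀) ^ 2 = v₀ ω ^ 2 / m₀ ^ 2 := by
          field_simp
          ring
        rw [this, zero_add]
        exact (div_le_div_iff_of_pos_right (by positivity)).mpr h2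
    have hRint : Integrable (fun ω => W.indicator (fun _ => 1 / m₁ ^ 2) ω
        + Wᶜ.indicator (fun _ => 1 / m₀ ^ 2) ω) P :=
      ((integrable_const _).indicator hW).add ((integrable_const _).indicator hW.compl)
    have hRval : ∫ ω, (W.indicator (fun _ => 1 / m₁ ^ 2) ω
        + Wᶜ.indicator (fun _ => 1 / m₀ ^ 2) ω) ∂P = p / m₁ ^ 2 + (1 - p) / m₀ ^ 2 := by
      rw [integral_add ((integrable_const _).indicator hW)
        ((integrable_const _).indicator hW.compl),
        integral_indicator_const _ hW, integral_indicator_const _ hW.compl,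
        measureReal_def, measureReal_def, prob_compl_eq_one_sub hW,
        ENNReal.toReal_sub_of_le prob_le_one ENNReal.one_ne_top]
      simp only [ENNReal.toReal_one, smul_eq_mul, ← hpdef]
      ring
    calc variance gf P ≤ ∫ ω, (gf ^ 2) ω ∂P := hvar
      _ ≤ ∫ ω, (W.indicator (fun _ => 1 / m₁ ^ 2) ω
          + Wᶜ.indicator (fun _ => 1 / m₀ ^ 2) ω) ∂P :=
        integral_mono hg2int hRint hsq
      _ = p / m₁ ^ 2 + (1 - p) / m₀ ^ 2 := hRval
      _ ≤ 6 / (phat * (1 - phat)) + 6 / (phat * (1 - phat)) := add_le_add hvv1 hvv0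
      _ = 12 * (1 / (phat * (1 - phat))) := by ring
end

section
/- There exists a universal constant C > 0 such that for all p, p̂ ∈ [0,1] and ε ∈ (0,1] satisfying |p̂ − p| ≤ ε·√(p·(1−p)) + ε², one has p̂·(1−p̂) · ( p / max(ε², p̂) − 1 )² ≤ C·ε². -/
set_option maxHeartbeats 1000000 in
/-- Core deterministic IPW ratio bound: there is a universal constant `C` such that
whenever `|p̂ - p| ≤ ε √(p(1-p)) + ε²` with `p, p̂ ∈ [0,1]` and `ε ∈ (0,1]`, the
variance-weighted propensity-ratio error satisfies
`p̂(1-p̂) (p / max(ε², p̂) - 1)² ≤ C ε²`. -/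
theorem ipw_ratio_bound :
    ∃ C : ℝ, 0 < C ∧
      ∀ p phat ε : ℝ, p ∈ Set.Icc (0:ℝ) 1 → phat ∈ Set.Icc (0:ℝ) 1 →
        ε ∈ Set.Ioc (0:ℝ) 1 →
        |phat - p| ≤ ε * Real.sqrt (p * (1 - p)) + ε ^ 2 →
        phat * (1 - phat) * (p / max (ε ^ 2) phat - 1) ^ 2 ≤ C * ε ^ 2 := by
  refine ⟨16, by norm_num, ?_⟩
  rintro p phat ε ⟨hp0, hp1⟩ ⟨hh0, hh1⟩ ⟨hε0, hε1⟩ hb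
  set s := Real.sqrt (p * (1 - p)) with hs
  have hs0 : 0 ≤ s := Real.sqrt_nonneg _
  have hssq : s ^ 2 = p * (1 - p) := Real.sq_sqrt (by nlinarith)
  have hsp : s ^ 2 ≤ p := by nlinarith
  have habs := abs_sub_le_iff.mp hb
  obtain ⟨h1, h2⟩ := habs
  have hε2 : (0:ℝ) < ε ^ 2 := by positivity
  rcases le_or_gt phat (ε ^ 2) with hcase | hcase
  · rw [max_eq_left hcase]
    -- s ≤ 2ε, hence p ≤ 4ε²
    have hsle : s ≤ 2 * ε := by nlinarith
    have hple : p ≤ 4 * ε ^ 2 := by nlinarith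
    have hq0 : 0 ≤ p / ε ^ 2 := div_nonneg hp0 hε2.le
    have hq4 : p / ε ^ 2 ≤ 4 := (div_le_iff₀ hε2).mpr (by nlinarith)
    have h9 : (p / ε ^ 2 - 1) ^ 2 ≤ 9 := by nlinarith
    have hmul : phat * (1 - phat) ≤ ε ^ 2 := by nlinarith
    have hmul0 : 0 ≤ phat * (1 - phat) := mul_nonneg hh0 (by linarith)
    calc phat * (1 - phat) * (p / ε ^ 2 - 1) ^ 2
        ≤ ε ^ 2 * (p / ε ^ 2 - 1) ^ 2 :=
          mul_le_mul_of_nonneg_right hmul (sq_nonneg _)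
      _ ≤ ε ^ 2 * 9 := mul_le_mul_of_nonneg_left h9 hε2.le
      _ ≤ 16 * ε ^ 2 := by nlinarith
  · rw [max_eq_right hcase.le]
    have hph0 : 0 < phat := lt_trans hε2 hcase
    have key : phat * (1 - phat) * (p / phat - 1) ^ 2
        = (1 - phat) * (p - phat) ^ 2 / phat := by
      field_simp
    rw [key, div_le_iff₀ hph0]
    -- εs ≤ 4 phat, p ≤ 6 phat
    have hεs : ε * s ≤ 4 * phat := by nlinarith
    have hp6 : p ≤ 6 * phat := by nlinarith
    have hsq : (p - phat) ^ 2 ≤ 2 * ε ^ 2 * s ^ 2 + 2 * ε ^ 4 := by nlinarith [sq_nonneg (ε * s - ε ^ 2)]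
    have hA : (1 - phat) * (p - phat) ^ 2 ≤ (p - phat) ^ 2 := by
      nlinarith [sq_nonneg (p - phat)]
    have hB : 2 * ε ^ 2 * s ^ 2 ≤ 2 * ε ^ 2 * p := by nlinarith
    have hC : 2 * ε ^ 4 ≤ 2 * ε ^ 2 * phat := by nlinarith
    have hD : 2 * ε ^ 2 * p ≤ 12 * (ε ^ 2 * phat) := by nlinarith [mul_le_mul_of_nonneg_left hp6 hε2.le]
    have hE : (0:ℝ) ≤ ε ^ 2 * phat := by positivity
    linarith
end

section
/- There exists a universal constant C > 0 with the following property. Let n ≥ 1, η > 0, 0 < λ̲ ≤ Λ, and let ℓ₁, …, ℓₙ be real numbers with η·|ℓₜ| ≤ 1/2 for every t. Define λ₁ ∈ [λ̲, Λ] and λₜ₊₁ = min(Λ, max(λ̲, λₜ·exp(−η·ℓₜ))) for t = 1, …, n−1. Then for every λ ∈ [λ̲, Λ], Σₜ₌₁ⁿ (λₜ − λ)·ℓₜ ≤ C·( Λ·(1 + log(Λ/λ̲))/η + η·Λ·Σₜ₌₁ⁿ ℓₜ² ). -/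
open Real Finset

private noncomputable def Bdiv (c y : ℝ) : ℝ := c * Real.log (c / y) - c + y

private lemma Bdiv_nonneg {c y : ℝ} (hc : 0 < c) (hy : 0 < y) : 0 ≤ Bdiv c y := by
  have h : Real.log (y / c) ≤ y / c - 1 := Real.log_le_sub_one_of_pos (by positivity)
  have hlog : Real.log (c / y) = - Real.log (y / c) := by
    rw [← Real.log_inv]; congr 1; field_simp
  have h2 : 1 - y / c ≤ Real.log (c / y) := by rw [hlog]; linarith
  have h3 := mul_le_mul_of_nonneg_left h2 hc.le
  have hcy : c * (1 - y / c) = c - y := by field_simp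
  unfold Bdiv
  nlinarith

/-- exp(x) ≤ 1 + x + x² for |x| ≤ 1 -/
private lemma exp_quad {x : ℝ} (hx : |x| ≤ 1) : Real.exp x ≤ 1 + x + x ^ 2 := by
  have h := Real.exp_bound hx (n := 2) (by norm_num)
  have hs : ∑ m ∈ Finset.range 2, x ^ m / m.factorial = 1 + x := by
    simp [Finset.sum_range_succ]
  rw [hs] at h
  have h1 := (abs_sub_le_iff.1 h).1
  have h2 : |x| ^ 2 = x ^ 2 := sq_abs x
  have h3 : |x| ^ 2 * ((2 : ℕ).succ / ((2:ℕ).factorial * 2)) ≤ x ^ 2 := by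
    rw [h2]; norm_num; nlinarith [sq_nonneg x]
  linarith

/-- Pythagorean / projection inequality for the clipped point. -/
private lemma proj_le {c y lo L : ℝ} (hy : 0 < y) (hlo : 0 < lo) (hloL : lo ≤ L)
    (hc1 : lo ≤ c) (hc2 : c ≤ L) :
    Bdiv c (min L (max lo y)) ≤ Bdiv c y := by
  set p := min L (max lo y) with hp
  have hppos : 0 < p := lt_min (lt_of_lt_of_le hlo hloL) (lt_of_lt_of_le hlo (le_max_left _ _))
  have hcpos : 0 < c := lt_of_lt_of_le hlo hc1
  -- Bdiv c p - Bdiv c y = c * log (y / p) + p - y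
  have hdiff : Bdiv c p - Bdiv c y = c * Real.log (y / p) + p - y := by
    unfold Bdiv
    have : Real.log (c / p) - Real.log (c / y) = Real.log (y / p) := by
      rw [Real.log_div hcpos.ne' hppos.ne', Real.log_div hcpos.ne' hy.ne',
        Real.log_div hy.ne' hppos.ne']
      ring
    nlinarith [this]
  have key : c * Real.log (y / p) + p - y ≤ 0 := by
    rcases lt_or_ge y lo with h | h
    · -- p = lo
      have hpl : p = lo := by
        rw [hp, max_eq_left h.le, min_eq_right hloL]
      rw [hpl]
      have hlog : Real.log (y / lo) ≤ y / lo - 1 := Real.log_le_sub_one_of_pos (by positivity)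
      have hneg : Real.log (y / lo) ≤ 0 := Real.log_nonpos (by positivity) ((div_le_one hlo).2 h.le)
      have : c * Real.log (y / lo) ≤ lo * Real.log (y / lo) :=
        mul_le_mul_of_nonpos_right hc1 hneg
      have h2 : lo * Real.log (y / lo) ≤ lo * (y / lo - 1) :=
        mul_le_mul_of_nonneg_left hlog hlo.le
      have h3 : lo * (y / lo - 1) = y - lo := by field_simp
      linarith
    · rcases le_or_gt y L with h' | h'
      · have hpy : p = y := by rw [hp, max_eq_right h, min_eq_right h']
        rw [hpy]
        rw [div_self hy.ne', Real.log_one]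
        simp
      · -- p = L
        have hpL : p = L := by
          rw [hp, max_eq_right h, min_eq_left h'.le]
        rw [hpL]
        have hLpos : 0 < L := hlo.trans_le hloL
        have hlog : Real.log (y / L) ≤ y / L - 1 := Real.log_le_sub_one_of_pos (by positivity)
        have hpos : 0 ≤ Real.log (y / L) := Real.log_nonneg ((one_le_div hLpos).2 h'.le)
        have : c * Real.log (y / L) ≤ L * Real.log (y / L) :=
          mul_le_mul_of_nonneg_right hc2 hpos
        have h2 : L * Real.log (y / L) ≤ L * (y / L - 1) :=
          mul_le_mul_of_nonneg_left hlog hLpos.le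
        have h3 : L * (y / L - 1) = y - L := by field_simp
        linarith
  linarith

/-- One-step inequality. -/
private lemma step_ineq {c lo L η lt x : ℝ} (hη : 0 < η) (hlo : 0 < lo) (hloL : lo ≤ L)
    (hc1 : lo ≤ c) (hc2 : c ≤ L) (hx1 : lo ≤ x) (hx2 : x ≤ L) (hl : η * |lt| ≤ 1 / 2) :
    η * ((x - c) * lt) ≤
      Bdiv c x - Bdiv c (min L (max lo (x * Real.exp (-η * lt)))) + η ^ 2 * L * lt ^ 2 := by
  have hxpos : 0 < x := hlo.trans_le hx1
  have hcpos : 0 < c := hlo.trans_le hc1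
  set y := x * Real.exp (-η * lt) with hy
  have hypos : 0 < y := by positivity
  -- Bdiv c y = Bdiv c x + η * c * lt + x * (exp(-η lt) - 1)
  have hBy : Bdiv c y = Bdiv c x + c * (η * lt) + x * (Real.exp (-η * lt) - 1) := by
    unfold Bdiv
    have hlogy : Real.log (c / y) = Real.log (c / x) + η * lt := by
      rw [hy, Real.log_div hcpos.ne' hypos.ne', Real.log_mul hxpos.ne' (Real.exp_pos _).ne',
        Real.log_exp, Real.log_div hcpos.ne' hxpos.ne']
      ring
    rw [hlogy]; ring
  have hproj : Bdiv c (min L (max lo y)) ≤ Bdiv c y := proj_le hypos hlo hloL hc1 hc2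
  -- exp bound
  have habs : |(-η * lt)| ≤ 1 := by
    rw [abs_mul, abs_neg, abs_of_pos hη]
    linarith
  have hexp : Real.exp (-η * lt) ≤ 1 + (-η * lt) + (-η * lt) ^ 2 := exp_quad habs
  have hquad : x * (Real.exp (-η * lt) - 1) ≤ -x * (η * lt) + x * (η * lt) ^ 2 := by
    nlinarith [hxpos.le]
  have hxL : x * (η * lt) ^ 2 ≤ η ^ 2 * L * lt ^ 2 := by
    nlinarith [sq_nonneg lt, sq_nonneg (η * lt)]
  nlinarith [hproj, hBy, hquad, hxL]

/-- Projected entropic OMD regret on `[λ̲, Λ]` for the RoS dual variable: there is a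
universal constant `C` such that the clipped multiplicative update
`λₜ₊₁ = min(Λ, max(λ̲, λₜ e^{-η ℓₜ}))`, under `η |ℓₜ| ≤ 1/2`, has regret against every
fixed `λ ∈ [λ̲, Λ]` at most `C (Λ (1 + log(Λ/λ̲))/η + η Λ Σ ℓₜ²)`. -/
theorem projected_omd_regret :
    ∃ C : ℝ, 0 < C ∧
      ∀ (n : ℕ), 1 ≤ n →
      ∀ (η : ℝ), 0 < η →
      ∀ (lamLo Lam : ℝ), 0 < lamLo → lamLo ≤ Lam →
      ∀ (l : ℕ → ℝ), (∀ t < n, η * |l t| ≤ 1 / 2) →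
      ∀ (lam : ℕ → ℝ), lam 0 ∈ Set.Icc lamLo Lam →
        (∀ t < n, lam (t + 1) = min Lam (max lamLo (lam t * Real.exp (-η * l t)))) →
      ∀ lamc ∈ Set.Icc lamLo Lam,
        ∑ t ∈ Finset.range n, (lam t - lamc) * l t ≤
          C * (Lam * (1 + Real.log (Lam / lamLo)) / η
            + η * Lam * ∑ t ∈ Finset.range n, (l t) ^ 2) := by
  refine ⟨1, one_pos, ?_⟩
  intro n hn η hη lamLo Lam hlo hloL l hl lam hlam0 hupd lamc hlamc
  obtain ⟨hc1, hc2⟩ := hlamc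
  -- membership of iterates
  have hmem : ∀ t, t ≤ n → lam t ∈ Set.Icc lamLo Lam := by
    intro t
    induction t with
    | zero => intro _; exact hlam0
    | succ k ih =>
      intro hk
      rw [hupd k (by omega)]
      constructor
      · exact le_min (by linarith [le_max_left lamLo (lam k * Real.exp (-η * l k)),
          (min_le_right Lam (max lamLo (lam k * Real.exp (-η * l k))))]) (le_max_left _ _) |>.trans (le_refl _)
      · exact min_le_left _ _
  -- telescoping sum inequality
  have hsum : ∀ m, m ≤ n →
      ∑ t ∈ Finset.range m, η * ((lam t - lamc) * l t) ≤
        Bdiv lamc (lam 0) - Bdiv lamc (lam m) +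
          ∑ t ∈ Finset.range m, η ^ 2 * Lam * (l t) ^ 2 := by
    intro m
    induction m with
    | zero => simp
    | succ k ih =>
      intro hk
      have hk' : k ≤ n := by omega
      have hmemk := hmem k hk'
      have hstep := step_ineq (c := lamc) hη hlo hloL hc1 hc2 hmemk.1 hmemk.2 (hl k (by omega))
      rw [Finset.sum_range_succ, Finset.sum_range_succ]
      have hupdk := hupd k (by omega)
      rw [← hupdk] at hstep
      linarith [ih hk']
  have hfin := hsum n le_rfl
  -- bound on Bdiv lamc (lam 0)
  have hlam0' := hlam0
  obtain ⟨h01, h02⟩ := hlam0'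
  have hBinit : Bdiv lamc (lam 0) ≤ Lam * (1 + Real.log (Lam / lamLo)) := by
    unfold Bdiv
    have hLpos : 0 < Lam := hlo.trans_le hloL
    have hl0pos : 0 < lam 0 := hlo.trans_le h01
    have hcpos : 0 < lamc := hlo.trans_le hc1
    have hmono : Real.log (lamc / lam 0) ≤ Real.log (Lam / lamLo) := by
      apply Real.log_le_log (by positivity)
      exact div_le_div₀ hLpos.le hc2 hlo h01
    have hlogLlo : 0 ≤ Real.log (Lam / lamLo) := Real.log_nonneg ((one_le_div hlo).2 hloL)
    rcases le_or_gt 0 (Real.log (lamc / lam 0)) with h | h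
    · have : lamc * Real.log (lamc / lam 0) ≤ Lam * Real.log (Lam / lamLo) := by
        nlinarith
      nlinarith
    · have : lamc * Real.log (lamc / lam 0) ≤ 0 := mul_nonpos_of_nonneg_of_nonpos hcpos.le h.le
      nlinarith
  have hBn : 0 ≤ Bdiv lamc (lam n) := Bdiv_nonneg (hlo.trans_le hc1) (hlo.trans_le (hmem n le_rfl).1)
  -- combine
  have hLHS : η * ∑ t ∈ Finset.range n, (lam t - lamc) * l t ≤
      Lam * (1 + Real.log (Lam / lamLo)) + η ^ 2 * Lam * ∑ t ∈ Finset.range n, (l t) ^ 2 := by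
    rw [Finset.mul_sum]
    calc ∑ t ∈ Finset.range n, η * ((lam t - lamc) * l t)
        ≤ Bdiv lamc (lam 0) - Bdiv lamc (lam n) +
            ∑ t ∈ Finset.range n, η ^ 2 * Lam * (l t) ^ 2 := hfin
      _ ≤ Lam * (1 + Real.log (Lam / lamLo)) + η ^ 2 * Lam * ∑ t ∈ Finset.range n, (l t) ^ 2 := by
          rw [← Finset.mul_sum]
          linarith
  rw [one_mul]
  calc ∑ t ∈ Finset.range n, (lam t - lamc) * l t
      = (η * ∑ t ∈ Finset.range n, (lam t - lamc) * l t) / η := by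
        field_simp
    _ ≤ (Lam * (1 + Real.log (Lam / lamLo)) + η ^ 2 * Lam * ∑ t ∈ Finset.range n, (l t) ^ 2) / η := by
        gcongr
    _ = Lam * (1 + Real.log (Lam / lamLo)) / η + η * Lam * ∑ t ∈ Finset.range n, (l t) ^ 2 := by
        field_simp
end
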